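/- arXiv:1406.4063 — 7 statements merged into one kernel-verified Lean document; each statement's English description precedes it below -/
import Mathlib

section
/- (Recursive strict feasibility.) Let g be C¹ on an open set containing the compact box I ⊂ ℝ^{n_u} with strict univariate Lipschitz constants κ_i > 0 on I. Let (u_k)_{k≥0} be a sequence in I with g(u_0) < 0 such that for every k the condition g(u_k) + Σ_{i=1}^{n_u} κ_i |u_{k+1,i} − u_{k,i}| ≤ 0 holds. Then g(u_k) < 0 for every k ≥ 0. -/
/-!
The mean value theorem on the segment from `u k` to `u (k + 1)`, which stays in the convex box,
writes `g (u (k + 1)) - g (u k)` as `Dg(c) (u (k + 1) - u k)`. Expanding in the coordinate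
directions, the strict bounds on the partial derivatives make this strictly smaller than
`∑ i, κ i * |u (k + 1) i - u k i| ≤ -g (u k)` whenever the step is nonzero, so `g` stays
negative along the sequence.
-/

open Finset

variable {ι : Type*} [Fintype ι] [DecidableEq ι] {κ : ι → ℝ}

theorem abs_apply_lt_sum_mul_abs (L : (ι → ℝ) →L[ℝ] ℝ) (hL : ∀ i, |L (Pi.single i 1)| < κ i)
    {v : ι → ℝ} (hv : v ≠ 0) : |L v| < ∑ i, κ i * |v i| := by
  obtain ⟨j, hj⟩ := Function.ne_iff.1 hv
  calc |L v| = |∑ i, v i * L (Pi.single i 1)| := by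
        conv_lhs => rw [pi_eq_sum_univ' v]
        simp only [map_sum, map_smul, smul_eq_mul]
    _ ≤ ∑ i, |v i * L (Pi.single i 1)| := abs_sum_le_sum_abs _ _
    _ < ∑ i, κ i * |v i| := by
        simp only [abs_mul, mul_comm |v _|]
        refine sum_lt_sum (fun i _ => by gcongr; exact (hL i).le) ⟨j, mem_univ j, ?_⟩
        exact mul_lt_mul_of_pos_right (hL j) (abs_pos.2 hj)

theorem Convex.abs_sub_lt_sum_mul_abs_sub {s : Set (ι → ℝ)} (hs : Convex ℝ s)
    {g : (ι → ℝ) → ℝ} (hg : ∀ x ∈ s, DifferentiableAt ℝ g x)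
    (hκ : ∀ x ∈ s, ∀ i, |fderiv ℝ g x (Pi.single i 1)| < κ i)
    {a b : ι → ℝ} (ha : a ∈ s) (hb : b ∈ s) (hab : a ≠ b) :
    |g b - g a| < ∑ i, κ i * |b i - a i| := by
  obtain ⟨c, hc, hmvt⟩ :=
    domain_mvt (fun x hx => (hg x hx).hasFDerivAt.hasFDerivWithinAt) hs ha hb
  rw [hmvt]
  simpa only [Pi.sub_apply] using
    abs_apply_lt_sum_mul_abs _ (hκ c (hs.segment_subset ha hb hc)) (sub_ne_zero.2 hab.symm)

theorem recursive_strict_feasibility_general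
    {n : ℕ} (uL uU : Fin n → ℝ)
    (g : (Fin n → ℝ) → ℝ)
    (U : Set (Fin n → ℝ)) (hUopen : IsOpen U) (hIU : Set.Icc uL uU ⊆ U)
    (hg : ContDiffOn ℝ 1 g U)
    (κ : Fin n → ℝ)
    (hκ : ∀ u ∈ Set.Icc uL uU, ∀ i, |fderiv ℝ g u (Pi.single i 1)| < κ i)
    (u : ℕ → (Fin n → ℝ)) (huI : ∀ k, u k ∈ Set.Icc uL uU)
    (h0 : g (u 0) < 0)
    (hrec : ∀ k, g (u k) + ∑ i, κ i * |u (k + 1) i - u k i| ≤ 0) :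
    ∀ k, g (u k) < 0 := by
  have hdiff : ∀ x ∈ Set.Icc uL uU, DifferentiableAt ℝ g x := fun x hx =>
    (hg.differentiableOn one_ne_zero).differentiableAt (hUopen.mem_nhds (hIU hx))
  intro k
  induction k with
  | zero => exact h0
  | succ k ih =>
    rcases eq_or_ne (u k) (u (k + 1)) with hstay | hmove
    · rwa [← hstay]
    · have hstep := (convex_Icc uL uU).abs_sub_lt_sum_mul_abs_sub hdiff hκ (huI k) (huI (k + 1))
        hmove
      linarith [le_abs_self (g (u (k + 1)) - g (u k)), hrec k]

/-- Recursive strict feasibility: if `g(u 0) < 0` and each iterate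
satisfies `g (u k) + Σ_i κ i * |u (k+1) i - u k i| ≤ 0`, where the `κ i` are strict
univariate Lipschitz constants for the C¹ function `g` on the box `I = Icc uL uU`
containing all iterates, then `g (u k) < 0` for every `k`. -/
theorem recursive_strict_feasibility
    {n : ℕ} (uL uU : Fin n → ℝ)
    (g : (Fin n → ℝ) → ℝ)
    (U : Set (Fin n → ℝ)) (hUopen : IsOpen U) (hIU : Set.Icc uL uU ⊆ U)
    (hg : ContDiffOn ℝ 1 g U)
    (κ : Fin n → ℝ) (hκpos : ∀ i, 0 < κ i)
    (hκ : ∀ u ∈ Set.Icc uL uU, ∀ i, |fderiv ℝ g u (Pi.single i 1)| < κ i)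
    (u : ℕ → (Fin n → ℝ)) (huI : ∀ k, u k ∈ Set.Icc uL uU)
    (h0 : g (u 0) < 0)
    (hrec : ∀ k, g (u k) + ∑ i, κ i * |u (k + 1) i - u k i| ≤ 0) :
    ∀ k, g (u k) < 0 :=
  recursive_strict_feasibility_general uL uU g U hUopen hIU hg κ hκ u huI h0 hrec
end

section
/- (Strict monotonic cost improvement.) Let φ be C² on an open set containing the compact box I ⊂ ℝ^{n_u} with strict second-derivative Lipschitz constants M_{i₁i₂} > 0 on I. If u, v ∈ I with v ≠ u satisfy the condition ∇φ(u)ᵀ(v − u) + (1/2) Σ_{i₁=1}^{n_u} Σ_{i₂=1}^{n_u} M_{i₁i₂} |(v_{i₁} − u_{i₁})(v_{i₂} − u_{i₂})| ≤ 0, then φ(v) < φ(u). -/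
/-!
Along the segment, `g t = φ (u + t • d)` with `d = v - u` has second derivative the Hessian
quadratic form at `d`. Expanded in coordinates it is bounded termwise by `M i₁ i₂ |d i₁ d i₂|`,
strictly on a diagonal term with `d i ≠ 0`, so `g'' < S := ∑ M i₁ i₂ |d i₁ d i₂|`. Hence
`t ↦ g t - t g' 0 - S t² / 2` is strictly decreasing, and `g 1 < g 0 + g' 0 + S / 2 ≤ g 0`.
-/

open Set

theorem ContinuousLinearMap.apply_apply_eq_sum {ι : Type*} [Fintype ι] [DecidableEq ι]
    (B : (ι → ℝ) →L[ℝ] (ι → ℝ) →L[ℝ] ℝ) (x y : ι → ℝ) :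
    B x y = ∑ i, ∑ j, x i * y j * B (Pi.single i 1) (Pi.single j 1) := by
  conv_lhs => rw [pi_eq_sum_univ' x, pi_eq_sum_univ' y]
  simp only [map_sum, map_smul, FunLike.coe_sum, Finset.sum_apply,
    FunLike.coe_smul, Pi.smul_apply, smul_eq_mul, Finset.mul_sum]
  rw [Finset.sum_comm]
  exact Finset.sum_congr rfl fun i _ => Finset.sum_congr rfl fun j _ => by ring

theorem ContinuousLinearMap.apply_apply_self_lt_sum {ι : Type*} [Fintype ι] [DecidableEq ι]
    (B : (ι → ℝ) →L[ℝ] (ι → ℝ) →L[ℝ] ℝ) {M : ι → ι → ℝ}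
    (hB : ∀ i j, |B (Pi.single i 1) (Pi.single j 1)| < M i j) {d : ι → ℝ} (hd : d ≠ 0) :
    B d d < ∑ i, ∑ j, M i j * |d i * d j| := by
  obtain ⟨k, hk⟩ := Function.ne_iff.mp hd
  have h_le_abs : ∀ i j, d i * d j * B (Pi.single i 1) (Pi.single j 1) ≤
      |B (Pi.single i 1) (Pi.single j 1)| * |d i * d j| := fun i j => by
    rw [mul_comm, ← abs_mul]; exact le_abs_self _
  rw [B.apply_apply_eq_sum, ← Fintype.sum_prod_type', ← Fintype.sum_prod_type']
  refine Finset.sum_lt_sum (fun p _ => ?_) ⟨(k, k), Finset.mem_univ _, ?_⟩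
  · exact (h_le_abs _ _).trans (mul_le_mul_of_nonneg_right (hB _ _).le (abs_nonneg _))
  · exact (h_le_abs k k).trans_lt
      (mul_lt_mul_of_pos_right (hB k k) (abs_pos.mpr (mul_ne_zero hk hk)))

section

variable {E F : Type*} [NormedAddCommGroup E] [NormedSpace ℝ E]
  [NormedAddCommGroup F] [NormedSpace ℝ F]

theorem hasDerivAt_comp_add_smul {f : E → F} {u d : E} {t : ℝ}
    (hf : DifferentiableAt ℝ f (u + t • d)) :
    HasDerivAt (fun s : ℝ => f (u + s • d)) (fderiv ℝ f (u + t • d) d) t := by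
  simpa [Function.comp_def] using
    hf.hasFDerivAt.comp_hasDerivAt t (((hasDerivAt_id' t).smul_const d).const_add u)

theorem hasDerivAt_fderiv_comp_add_smul_apply {f : E → F} {u d : E} {t : ℝ}
    (hf : DifferentiableAt ℝ (fderiv ℝ f) (u + t • d)) :
    HasDerivAt (fun s : ℝ => fderiv ℝ f (u + s • d) d)
      (fderiv ℝ (fderiv ℝ f) (u + t • d) d d) t := by
  simpa using (hasDerivAt_comp_add_smul hf).clm_apply (hasDerivAt_const t d)

theorem fderiv_fderiv_apply_const_eq {f : E → F} {x : E}
    (hf : DifferentiableAt ℝ (fderiv ℝ f) x) (v w : E) :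
    fderiv ℝ (fun y => fderiv ℝ f y w) x v = fderiv ℝ (fderiv ℝ f) x v w := by
  rw [(hf.hasFDerivAt.clm_apply (hasFDerivAt_const w x)).fderiv]
  simp

end

theorem fderiv_fderiv_apply_self_lt_sum {ι : Type*} [Fintype ι] [DecidableEq ι]
    {f : (ι → ℝ) → ℝ} {x : ι → ℝ} (hf : DifferentiableAt ℝ (fderiv ℝ f) x) {M : ι → ι → ℝ}
    (hM : ∀ i j, |fderiv ℝ (fun y => fderiv ℝ f y (Pi.single i 1)) x (Pi.single j 1)| < M i j)
    {d : ι → ℝ} (hd : d ≠ 0) :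
    fderiv ℝ (fderiv ℝ f) x d d < ∑ i, ∑ j, M i j * |d i * d j| := by
  refine (fderiv ℝ (fderiv ℝ f) x).flip.apply_apply_self_lt_sum (fun i j => ?_) hd
  simpa [fderiv_fderiv_apply_const_eq hf] using hM i j

theorem strictAntiOn_Icc_of_hasDerivAt_neg {f f' : ℝ → ℝ} {a b : ℝ}
    (hf : ∀ t ∈ Icc a b, HasDerivAt f (f' t) t) (hf' : ∀ t ∈ Ioo a b, f' t < 0) :
    StrictAntiOn f (Icc a b) :=
  strictAntiOn_of_hasDerivWithinAt_neg (convex_Icc a b)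
    (fun t ht => (hf t ht).continuousAt.continuousWithinAt)
    (fun t ht => by
      rw [interior_Icc] at ht ⊢
      exact (hf t (Ioo_subset_Icc_self ht)).hasDerivWithinAt)
    (fun t ht => hf' t (by rwa [interior_Icc] at ht))

theorem lt_add_deriv_mul_add_of_deriv2_lt {g g' g'' : ℝ → ℝ} {a b S : ℝ} (hab : a < b)
    (hg : ∀ t ∈ Icc a b, HasDerivAt g (g' t) t) (hg' : ∀ t ∈ Icc a b, HasDerivAt g' (g'' t) t)
    (hS : ∀ t ∈ Ioo a b, g'' t < S) :
    g b < g a + g' a * (b - a) + S / 2 * (b - a) ^ 2 := by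
  have ha : a ∈ Icc a b := left_mem_Icc.mpr hab.le
  have h_anti : StrictAntiOn (fun t => g' t - (t - a) * S) (Icc a b) :=
    strictAntiOn_Icc_of_hasDerivAt_neg
      (fun t ht => ((hg' t ht).sub (((hasDerivAt_id' t).sub_const a).mul_const S)).congr_deriv
        (by ring))
      (fun t ht => sub_neg.mpr (hS t ht))
  have h_taylor : StrictAntiOn (fun t => g t - (t - a) * g' a - S / 2 * (t - a) ^ 2) (Icc a b) :=
    strictAntiOn_Icc_of_hasDerivAt_neg
      (f' := fun t => (g' t - (t - a) * S) - (g' a - (a - a) * S))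
      (fun t ht => (((hg t ht).sub (((hasDerivAt_id' t).sub_const a).mul_const (g' a))).sub
        ((((hasDerivAt_id' t).sub_const a).pow 2).const_mul (S / 2))).congr_deriv (by ring))
      (fun t ht => sub_neg.mpr (h_anti ha (Ioo_subset_Icc_self ht) ht.1))
  have := h_taylor ha (right_mem_Icc.mpr hab.le) hab
  simp only [sub_self, zero_mul, sub_zero, ne_eq, OfNat.ofNat_ne_zero, not_false_eq_true,
    zero_pow, mul_zero] at this
  linarith

theorem strict_monotonic_improvement_general
    {n : ℕ} (uL uU : Fin n → ℝ)
    (φ : (Fin n → ℝ) → ℝ)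
    (U : Set (Fin n → ℝ)) (hUopen : IsOpen U) (hIU : Set.Icc uL uU ⊆ U)
    (hφ : ContDiffOn ℝ 2 φ U)
    (M : Fin n → Fin n → ℝ)
    (hM : ∀ u ∈ Set.Icc uL uU, ∀ i₁ i₂,
      |fderiv ℝ (fun x => fderiv ℝ φ x (Pi.single i₁ 1)) u (Pi.single i₂ 1)| < M i₁ i₂)
    (u v : Fin n → ℝ) (hu : u ∈ Set.Icc uL uU) (hv : v ∈ Set.Icc uL uU)
    (hne : v ≠ u)
    (hcond : fderiv ℝ φ u (v - u) +
      (1 / 2) * ∑ i₁, ∑ i₂, M i₁ i₂ * |(v i₁ - u i₁) * (v i₂ - u i₂)| ≤ 0) :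
    φ v < φ u := by
  have hseg : ∀ t ∈ Icc (0 : ℝ) 1, u + t • (v - u) ∈ Icc uL uU := fun t ht =>
    (convex_Icc uL uU).add_smul_sub_mem hu hv ht
  have hC2 : ∀ x ∈ Icc uL uU, ContDiffAt ℝ 2 φ x := fun x hx =>
    hφ.contDiffAt (hUopen.mem_nhds (hIU hx))
  have hD1 : ∀ x ∈ Icc uL uU, DifferentiableAt ℝ φ x := fun x hx =>
    (hC2 x hx).differentiableAt (by norm_num)
  have hD2 : ∀ x ∈ Icc uL uU, DifferentiableAt ℝ (fderiv ℝ φ) x := fun x hx =>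
    ((hC2 x hx).fderiv_right le_rfl).differentiableAt one_ne_zero
  have htaylor := lt_add_deriv_mul_add_of_deriv2_lt zero_lt_one
    (fun t ht => hasDerivAt_comp_add_smul (hD1 _ (hseg t ht)))
    (fun t ht => hasDerivAt_fderiv_comp_add_smul_apply (hD2 _ (hseg t ht)))
    (fun t ht => fderiv_fderiv_apply_self_lt_sum (hD2 _ (hseg t (Ioo_subset_Icc_self ht)))
      (hM _ (hseg t (Ioo_subset_Icc_self ht))) (sub_ne_zero.mpr hne))
  simp only [zero_smul, add_zero, one_smul, add_sub_cancel, sub_zero, mul_one, one_pow,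
    Pi.sub_apply] at htaylor
  linarith

/-- Strict monotonic cost improvement: if `φ` is C² on an open set
containing the box `I = Icc uL uU` with strict second-derivative Lipschitz constants
`M i₁ i₂` on `I`, and `u, v ∈ I` with `v ≠ u` satisfy
`∇φ(u)ᵀ(v-u) + (1/2) Σ_{i₁} Σ_{i₂} M i₁ i₂ |(v i₁ - u i₁)(v i₂ - u i₂)| ≤ 0`,
then `φ v < φ u`. -/
theorem strict_monotonic_improvement
    {n : ℕ} (uL uU : Fin n → ℝ)
    (φ : (Fin n → ℝ) → ℝ)
    (U : Set (Fin n → ℝ)) (hUopen : IsOpen U) (hIU : Set.Icc uL uU ⊆ U)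
    (hφ : ContDiffOn ℝ 2 φ U)
    (M : Fin n → Fin n → ℝ) (hMpos : ∀ i₁ i₂, 0 < M i₁ i₂)
    (hM : ∀ u ∈ Set.Icc uL uU, ∀ i₁ i₂,
      |fderiv ℝ (fun x => fderiv ℝ φ x (Pi.single i₁ 1)) u (Pi.single i₂ 1)| < M i₁ i₂)
    (u v : Fin n → ℝ) (hu : u ∈ Set.Icc uL uU) (hv : v ∈ Set.Icc uL uU)
    (hne : v ≠ u)
    (hcond : fderiv ℝ φ u (v - u) +
      (1 / 2) * ∑ i₁, ∑ i₂, M i₁ i₂ * |(v i₁ - u i₁) * (v i₂ - u i₂)| ≤ 0) :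
    φ v < φ u :=
  strict_monotonic_improvement_general uL uU φ U hUopen hIU hφ M hM u v hu hv hne hcond
end

section
/- (Theorem 2: sufficiently low filter gain for a numerical constraint.) Let g be C² on an open set containing the compact box I ⊂ ℝ^{n_u}, with strict univariate Lipschitz constants κ_i > 0 and strict second-derivative Lipschitz constants M_{i₁i₂} > 0 on I; let L̄ = Σ_i κ_i(u^U_i − u^L_i) and Q̄ = Σ_{i₁}Σ_{i₂} M_{i₁i₂}(u^U_{i₁} − u^L_{i₁})(u^U_{i₂} − u^L_{i₂}). Let u, v ∈ I, ε > 0, δ > 0, suppose g(u) ≤ 0, and suppose that if g(u) ≥ −ε then ∇g(u)ᵀ(v − u) ≤ −δ. Then for every K ∈ [0, min(1, ε/L̄, 2δ/Q̄)], the point u + K(v − u) satisfies g(u + K(v − u)) ≤ 0. -/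
/-!
Along the segment `t ↦ u + t • (v - u)`, which stays in the box, the first and second directional
derivatives of `g` in the direction `v - u` are bounded by `L̄` and `Q̄`. If `g u < -ε`, the
first-order bound gives `g (u + K • (v - u)) ≤ g u + K * L̄ < 0`. Otherwise the descent condition
and the second-order Taylor bound give `g (u + K • (v - u)) ≤ g u - K * δ + Q̄ * K ^ 2 / 2 ≤ g u`.
-/

open Set

theorem image_le_add_mul_of_hasDerivAt_le {φ φ' : ℝ → ℝ} {a b C : ℝ}
    (hφ : ∀ t ∈ Icc a b, HasDerivAt φ (φ' t) t) (hC : ∀ t ∈ Ico a b, φ' t ≤ C) :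
    ∀ t ∈ Icc a b, φ t ≤ φ a + C * (t - a) := by
  have hB (t : ℝ) : HasDerivAt (fun s => φ a + C * (s - a)) C t := by
    simpa using ((hasDerivAt_id t).sub_const a).const_mul C |>.const_add (φ a)
  exact image_le_of_deriv_right_le_deriv_boundary
    (fun t ht => (hφ t ht).continuousAt.continuousWithinAt)
    (fun t ht => (hφ t (Ico_subset_Icc_self ht)).hasDerivWithinAt) (by simp)
    (fun t _ => (hB t).continuousAt.continuousWithinAt) (fun t _ => (hB t).hasDerivWithinAt) hC

theorem image_le_taylor_two_of_hasDerivAt {φ φ' φ'' : ℝ → ℝ} {a b Q : ℝ}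
    (hφ : ∀ t ∈ Icc a b, HasDerivAt φ (φ' t) t) (hφ' : ∀ t ∈ Icc a b, HasDerivAt φ' (φ'' t) t)
    (hQ : ∀ t ∈ Ico a b, φ'' t ≤ Q) :
    ∀ t ∈ Icc a b, φ t ≤ φ a + φ' a * (t - a) + Q / 2 * (t - a) ^ 2 := by
  have hB (t : ℝ) : HasDerivAt (fun s => φ a + φ' a * (s - a) + Q / 2 * (s - a) ^ 2)
      (φ' a + Q * (t - a)) t := by
    refine ((((hasDerivAt_id' t).sub_const a).const_mul (φ' a)).const_add (φ a) |>.add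
      ((((hasDerivAt_id' t).sub_const a).pow 2).const_mul (Q / 2))).congr_deriv ?_
    ring
  exact image_le_of_deriv_right_le_deriv_boundary
    (fun t ht => (hφ t ht).continuousAt.continuousWithinAt)
    (fun t ht => (hφ t (Ico_subset_Icc_self ht)).hasDerivWithinAt) (by simp)
    (fun t _ => (hB t).continuousAt.continuousWithinAt) (fun t _ => (hB t).hasDerivWithinAt)
    (fun t ht => image_le_add_mul_of_hasDerivAt_le hφ' hQ t (Ico_subset_Icc_self ht))

section Segment

variable {E : Type*} [NormedAddCommGroup E] [NormedSpace ℝ E] {g : E → ℝ} {x w : E} {T : ℝ}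

theorem hasDerivAt_comp_add_smul_s6 {g' : E →L[ℝ] ℝ} {t : ℝ} (hg : HasFDerivAt g g' (x + t • w)) :
    HasDerivAt (fun s : ℝ => g (x + s • w)) (g' w) t :=
  hg.comp_hasDerivAt t (((hasDerivAt_id t).smul_const w).const_add x |>.congr_deriv (one_smul ℝ w))

theorem le_add_mul_of_fderiv_apply_le (hT : 0 ≤ T) {C : ℝ}
    (hg : ∀ t ∈ Icc 0 T, DifferentiableAt ℝ g (x + t • w))
    (hC : ∀ t ∈ Icc 0 T, fderiv ℝ g (x + t • w) w ≤ C) :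
    g (x + T • w) ≤ g x + T * C := by
  have h := image_le_add_mul_of_hasDerivAt_le
    (fun t ht => hasDerivAt_comp_add_smul_s6 (hg t ht).hasFDerivAt)
    (fun t ht => hC t (Ico_subset_Icc_self ht)) T ⟨hT, le_rfl⟩
  simpa [mul_comm] using h

theorem fderiv_fderiv_apply {x : E} (h : DifferentiableAt ℝ (fderiv ℝ g) x) (c y : E) :
    fderiv ℝ (fun z => fderiv ℝ g z c) x y = fderiv ℝ (fderiv ℝ g) x y c := by
  simp [fderiv_clm_apply h (differentiableAt_const c)]

theorem le_taylor_two_of_fderiv_fderiv_apply_le (hT : 0 ≤ T) {Q : ℝ}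
    (hg : ∀ t ∈ Icc 0 T, ContDiffAt ℝ 2 g (x + t • w))
    (hQ : ∀ t ∈ Icc 0 T, fderiv ℝ (fderiv ℝ g) (x + t • w) w w ≤ Q) :
    g (x + T • w) ≤ g x + T * fderiv ℝ g x w + Q / 2 * T ^ 2 := by
  have hφ' : ∀ t ∈ Icc 0 T, HasDerivAt (fun s : ℝ => fderiv ℝ g (x + s • w) w)
      (fderiv ℝ (fderiv ℝ g) (x + t • w) w w) t := fun t ht => by
    have h2 := (hg t ht).fderiv_right (m := 1) le_rfl |>.differentiableAt one_ne_zero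
    exact hasDerivAt_comp_add_smul_s6
      ((ContinuousLinearMap.apply ℝ ℝ w).hasFDerivAt.comp _ h2.hasFDerivAt)
  have h := image_le_taylor_two_of_hasDerivAt
    (fun t ht => hasDerivAt_comp_add_smul_s6 ((hg t ht).differentiableAt two_ne_zero).hasFDerivAt) hφ'
    (fun t ht => hQ t (Ico_subset_Icc_self ht)) T ⟨hT, le_rfl⟩
  simpa [mul_comm] using h

end Segment

theorem abs_apply_le_sum_mul {ι : Type*} [Fintype ι] [DecidableEq ι] (L : (ι → ℝ) →L[ℝ] ℝ)
    {x c d : ι → ℝ} (hL : ∀ i, |L (Pi.single i 1)| ≤ c i) (hx : ∀ i, |x i| ≤ d i) :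
    |L x| ≤ ∑ i, c i * d i := by
  have hLx : L x = ∑ i, x i * L (Pi.single i 1) := by
    conv_lhs => rw [← Finset.univ_sum_single x]
    rw [map_sum]
    refine Finset.sum_congr rfl fun i _ => ?_
    rw [← smul_eq_mul, ← L.map_smul, ← Pi.single_smul', smul_eq_mul, mul_one]
  rw [hLx]
  refine (Finset.abs_sum_le_sum_abs _ _).trans (Finset.sum_le_sum fun i _ => ?_)
  rw [abs_mul, mul_comm (c i)]
  exact mul_le_mul (hx i) (hL i) (abs_nonneg _) ((abs_nonneg _).trans (hx i))

theorem abs_apply_apply_le_sum_mul {ι : Type*} [Fintype ι] [DecidableEq ι]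
    (B : (ι → ℝ) →L[ℝ] (ι → ℝ) →L[ℝ] ℝ) {x y a b : ι → ℝ} {M : ι → ι → ℝ}
    (hB : ∀ i j, |B (Pi.single j 1) (Pi.single i 1)| ≤ M i j) (hx : ∀ j, |x j| ≤ a j)
    (hy : ∀ i, |y i| ≤ b i) :
    |B x y| ≤ ∑ i, ∑ j, M i j * b i * a j := by
  have hrow (i : ι) : |B x (Pi.single i 1)| ≤ ∑ j, M i j * a j :=
    abs_apply_le_sum_mul (B.flip (Pi.single i 1)) (hB i) hx
  calc |B x y| ≤ ∑ i, (∑ j, M i j * a j) * b i := abs_apply_le_sum_mul (B x) hrow hy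
    _ = ∑ i, ∑ j, M i j * b i * a j := by
      refine Finset.sum_congr rfl fun i _ => ?_
      rw [Finset.sum_mul]
      exact Finset.sum_congr rfl fun j _ => by ring

theorem mul_le_of_le_div_of_pos {K a b : ℝ} (ha : 0 < a) (hK : 0 < K) (h : K ≤ a / b) :
    K * b ≤ a :=
  (le_div_iff₀ ((div_pos_iff_of_pos_left ha).mp (hK.trans_le h))).mp h

theorem abs_sub_apply_le_of_mem_Icc {ι : Type*} {uL uU u v : ι → ℝ} (hu : u ∈ Icc uL uU)
    (hv : v ∈ Icc uL uU) (i : ι) : |(v - u) i| ≤ uU i - uL i :=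
  Real.dist_le_of_mem_Icc ⟨hv.1 i, hv.2 i⟩ ⟨hu.1 i, hu.2 i⟩

theorem filter_gain_numerical_constraint_general
    {n : ℕ} (uL uU : Fin n → ℝ)
    (g : (Fin n → ℝ) → ℝ)
    (U : Set (Fin n → ℝ)) (hUopen : IsOpen U) (hIU : Set.Icc uL uU ⊆ U)
    (hg : ContDiffOn ℝ 2 g U)
    (κ : Fin n → ℝ)
    (hκ : ∀ u ∈ Set.Icc uL uU, ∀ i, |fderiv ℝ g u (Pi.single i 1)| < κ i)
    (M : Fin n → Fin n → ℝ)
    (hM : ∀ u ∈ Set.Icc uL uU, ∀ i₁ i₂,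
      |fderiv ℝ (fun x => fderiv ℝ g x (Pi.single i₁ 1)) u (Pi.single i₂ 1)| < M i₁ i₂)
    (u v : Fin n → ℝ) (hu : u ∈ Set.Icc uL uU) (hv : v ∈ Set.Icc uL uU)
    (ε δ : ℝ) (hε : 0 < ε) (hδ : 0 < δ)
    (hgu : g u ≤ 0)
    (hdesc : g u ≥ -ε → fderiv ℝ g u (v - u) ≤ -δ)
    (K : ℝ)
    (hK : K ∈ Set.Icc 0
      (min 1 (min (ε / ∑ i, κ i * (uU i - uL i))
        (2 * δ / ∑ i₁, ∑ i₂, M i₁ i₂ * (uU i₁ - uL i₁) * (uU i₂ - uL i₂))))) :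
    g (u + K • (v - u)) ≤ 0 := by
  obtain ⟨hK0, hKmin⟩ := hK
  obtain rfl | hKpos := hK0.eq_or_lt
  · simpa using hgu
  have hw := abs_sub_apply_le_of_mem_Icc hu hv
  have hseg (t : ℝ) (ht : t ∈ Icc 0 K) : u + t • (v - u) ∈ Icc uL uU :=
    (convex_Icc uL uU).add_smul_sub_mem hu hv ⟨ht.1, ht.2.trans (hKmin.trans (min_le_left _ _))⟩
  have hC2 (x : Fin n → ℝ) (hx : x ∈ Icc uL uU) : ContDiffAt ℝ 2 g x :=
    hg.contDiffAt (hUopen.mem_nhds (hIU hx))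
  have hHess (x : Fin n → ℝ) (hx : x ∈ Icc uL uU) (i j : Fin n) :
      |fderiv ℝ (fderiv ℝ g) x (Pi.single j 1) (Pi.single i 1)| ≤ M i j := by
    rw [← fderiv_fderiv_apply ((hC2 x hx).fderiv_right (m := 1) le_rfl |>.differentiableAt
      one_ne_zero)]
    exact (hM x hx i j).le
  rcases lt_or_ge (g u) (-ε) with hfar | hnear
  · have hKL := mul_le_of_le_div_of_pos hε hKpos
      (hKmin.trans ((min_le_right _ _).trans (min_le_left _ _)))
    have hlin := le_add_mul_of_fderiv_apply_le hK0
      (fun t ht => (hC2 _ (hseg t ht)).differentiableAt two_ne_zero) fun t ht =>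
        (le_abs_self _).trans (abs_apply_le_sum_mul _ (fun i => (hκ _ (hseg t ht) i).le) hw)
    linarith
  · have hKQ := mul_le_of_le_div_of_pos (by positivity : (0 : ℝ) < 2 * δ) hKpos
      (hKmin.trans ((min_le_right _ _).trans (min_le_right _ _)))
    have htaylor := le_taylor_two_of_fderiv_fderiv_apply_le hK0 (fun t ht => hC2 _ (hseg t ht))
      fun t ht => (le_abs_self _).trans (abs_apply_apply_le_sum_mul _ (hHess _ (hseg t ht)) hw hw)
    nlinarith [mul_le_mul_of_nonneg_left (hdesc hnear) hK0, mul_le_mul_of_nonneg_left hKQ hK0]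

/-- **Theorem 2.** Sufficiently low filter gain for a numerical constraint:
with `L̄ = Σ_i κ i (uU i - uL i)`, `Q̄ = Σ_{i₁} Σ_{i₂} M i₁ i₂ (uU i₁ - uL i₁)(uU i₂ - uL i₂)`,
`g(u) ≤ 0`, and the descent condition `∇g(u)ᵀ(v-u) ≤ -δ` holding whenever `g(u) ≥ -ε`,
every `K ∈ [0, min 1 (min (ε/L̄) (2δ/Q̄))]` yields `g (u + K • (v - u)) ≤ 0`. -/
theorem filter_gain_numerical_constraint
    {n : ℕ} (uL uU : Fin n → ℝ)
    (g : (Fin n → ℝ) → ℝ)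
    (U : Set (Fin n → ℝ)) (hUopen : IsOpen U) (hIU : Set.Icc uL uU ⊆ U)
    (hg : ContDiffOn ℝ 2 g U)
    (κ : Fin n → ℝ) (hκpos : ∀ i, 0 < κ i)
    (hκ : ∀ u ∈ Set.Icc uL uU, ∀ i, |fderiv ℝ g u (Pi.single i 1)| < κ i)
    (M : Fin n → Fin n → ℝ) (hMpos : ∀ i₁ i₂, 0 < M i₁ i₂)
    (hM : ∀ u ∈ Set.Icc uL uU, ∀ i₁ i₂,
      |fderiv ℝ (fun x => fderiv ℝ g x (Pi.single i₁ 1)) u (Pi.single i₂ 1)| < M i₁ i₂)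
    (u v : Fin n → ℝ) (hu : u ∈ Set.Icc uL uU) (hv : v ∈ Set.Icc uL uU)
    (ε δ : ℝ) (hε : 0 < ε) (hδ : 0 < δ)
    (hgu : g u ≤ 0)
    (hdesc : g u ≥ -ε → fderiv ℝ g u (v - u) ≤ -δ)
    (K : ℝ)
    (hK : K ∈ Set.Icc 0
      (min 1 (min (ε / ∑ i, κ i * (uU i - uL i))
        (2 * δ / ∑ i₁, ∑ i₂, M i₁ i₂ * (uU i₁ - uL i₁) * (uU i₂ - uL i₂))))) :
    g (u + K • (v - u)) ≤ 0 :=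
  filter_gain_numerical_constraint_general uL uU g U hUopen hIU hg κ hκ M hM u v hu hv ε δ hε hδ hgu
    hdesc K hK
end

section
/- (Contraction of constraint slack.) Let g be C¹ on an open set containing the compact box I ⊂ ℝ^{n_u}, let κ_i > 0, γ ∈ [0,1), and let κ̃_i ≥ 0 satisfy |∂g/∂u_i(u)| ≤ κ̃_i for all u ∈ I together with κ̃_i ≤ γκ_i for every i. If u, v ∈ I satisfy Σ_{i=1}^{n_u} κ_i|v_i − u_i| ≤ −g(u), then g(v) ≤ (1 − γ) g(u). -/
/-! By the mean value theorem on the convex box, `g v - g u = Dg(z)(v - u)` for some `z` on the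
segment `[u, v]`. Expanding `v - u` in the coordinate basis bounds this by `Σ κ̃ᵢ |vᵢ - uᵢ|`, hence by
`γ Σ κᵢ |vᵢ - uᵢ| ≤ -γ g(u)`. -/

open Finset

theorem abs_apply_le_sum_abs_apply_single_mul_abs {ι : Type*} [Fintype ι] [DecidableEq ι]
    (L : (ι → ℝ) →L[ℝ] ℝ) (w : ι → ℝ) :
    |L w| ≤ ∑ i, |L (Pi.single i 1)| * |w i| := by
  calc |L w| = |∑ i, w i * L (Pi.single i 1)| := by
        conv_lhs => rw [pi_eq_sum_univ' w]
        simp only [map_sum, map_smul, smul_eq_mul]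
    _ ≤ ∑ i, |w i * L (Pi.single i 1)| := abs_sum_le_sum_abs _ _
    _ = ∑ i, |L (Pi.single i 1)| * |w i| := by simp only [abs_mul, mul_comm]

theorem Convex.sub_le_sum_mul_abs_sub_of_abs_fderiv_single_le {ι : Type*} [Fintype ι]
    [DecidableEq ι] {f : (ι → ℝ) → ℝ} {s : Set (ι → ℝ)} (hs : Convex ℝ s)
    (hf : ∀ x ∈ s, DifferentiableAt ℝ f x) {K : ι → ℝ}
    (hK : ∀ x ∈ s, ∀ i, |fderiv ℝ f x (Pi.single i 1)| ≤ K i)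
    {x y : ι → ℝ} (hx : x ∈ s) (hy : y ∈ s) :
    f y - f x ≤ ∑ i, K i * |y i - x i| := by
  obtain ⟨z, hz, hmvt⟩ :=
    domain_mvt (fun w hw => (hf w hw).hasFDerivAt.hasFDerivWithinAt) hs hx hy
  have hzs : z ∈ s := hs.segment_subset hx hy hz
  calc f y - f x ≤ |fderiv ℝ f z (y - x)| := hmvt ▸ le_abs_self _
    _ ≤ ∑ i, |fderiv ℝ f z (Pi.single i 1)| * |(y - x) i| :=
        abs_apply_le_sum_abs_apply_single_mul_abs _ _
    _ ≤ ∑ i, K i * |y i - x i| :=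
        sum_le_sum fun i _ => mul_le_mul_of_nonneg_right (hK z hzs i) (abs_nonneg _)

theorem slack_contraction_general
    {n : ℕ} (uL uU : Fin n → ℝ)
    (g : (Fin n → ℝ) → ℝ)
    (U : Set (Fin n → ℝ)) (hUopen : IsOpen U) (hIU : Set.Icc uL uU ⊆ U)
    (hg : ContDiffOn ℝ 1 g U)
    (κ : Fin n → ℝ)
    (γ : ℝ) (hγ : γ ∈ Set.Ico (0 : ℝ) 1)
    (κt : Fin n → ℝ)
    (hκt : ∀ u ∈ Set.Icc uL uU, ∀ i, |fderiv ℝ g u (Pi.single i 1)| ≤ κt i)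
    (hκtγ : ∀ i, κt i ≤ γ * κ i)
    (u v : Fin n → ℝ) (hu : u ∈ Set.Icc uL uU) (hv : v ∈ Set.Icc uL uU)
    (hstep : ∑ i, κ i * |v i - u i| ≤ -g u) :
    g v ≤ (1 - γ) * g u := by
  have hdiff : ∀ w ∈ Set.Icc uL uU, DifferentiableAt ℝ g w := fun w hw =>
    (hg.differentiableOn one_ne_zero).differentiableAt (hUopen.mem_nhds (hIU hw))
  have hmvt : g v - g u ≤ ∑ i, κt i * |v i - u i| :=
    (convex_Icc uL uU).sub_le_sum_mul_abs_sub_of_abs_fderiv_single_le hdiff hκt hu hv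
  have hweights : ∑ i, κt i * |v i - u i| ≤ γ * ∑ i, κ i * |v i - u i| := by
    rw [mul_sum]
    exact sum_le_sum fun i _ => by
      rw [← mul_assoc]
      exact mul_le_mul_of_nonneg_right (hκtγ i) (abs_nonneg _)
  have hslack : γ * ∑ i, κ i * |v i - u i| ≤ γ * -g u := mul_le_mul_of_nonneg_left hstep hγ.1
  linarith

/-- Contraction of constraint slack: if `|∂g/∂u_i| ≤ κ̃ i ≤ γ κ i` on
the box `I = Icc uL uU` with `γ ∈ [0,1)`, and `u, v ∈ I` satisfy
`Σ_i κ i |v i - u i| ≤ -g u`, then `g v ≤ (1 - γ) * g u`. -/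
theorem slack_contraction
    {n : ℕ} (uL uU : Fin n → ℝ)
    (g : (Fin n → ℝ) → ℝ)
    (U : Set (Fin n → ℝ)) (hUopen : IsOpen U) (hIU : Set.Icc uL uU ⊆ U)
    (hg : ContDiffOn ℝ 1 g U)
    (κ : Fin n → ℝ) (hκpos : ∀ i, 0 < κ i)
    (γ : ℝ) (hγ : γ ∈ Set.Ico (0 : ℝ) 1)
    (κt : Fin n → ℝ) (hκtnonneg : ∀ i, 0 ≤ κt i)
    (hκt : ∀ u ∈ Set.Icc uL uU, ∀ i, |fderiv ℝ g u (Pi.single i 1)| ≤ κt i)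
    (hκtγ : ∀ i, κt i ≤ γ * κ i)
    (u v : Fin n → ℝ) (hu : u ∈ Set.Icc uL uU) (hv : v ∈ Set.Icc uL uU)
    (hstep : ∑ i, κ i * |v i - u i| ≤ -g u) :
    g v ≤ (1 - γ) * g u :=
  slack_contraction_general uL uU g U hUopen hIU hg κ γ hγ κt hκt hκtγ u v hu hv hstep
end

section
/- (Non-decrease of constraint slack for near-active constraints.) Let g be C² on an open set containing the compact box I ⊂ ℝ^{n_u}, with strict univariate Lipschitz constants κ_i > 0 and strict second-derivative Lipschitz constants M_{i₁i₂} > 0 on I, and let Q̄ = Σ_{i₁}Σ_{i₂} M_{i₁i₂}(u^U_{i₁} − u^L_{i₁})(u^U_{i₂} − u^L_{i₂}). Let u, v ∈ I, δ > 0, and K ∈ [0,1] satisfy: ∇g(u)ᵀ(v − u) ≤ −δ, g(u) + K Σ_{i} κ_i|v_i − u_i| ≤ 0, and −g(u) ≤ 2δ²/Q̄. Then g(u + K(v − u)) ≤ g(u). -/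
/-- Non-decrease of constraint slack for near-active constraints:
with `Q̄ = Σ_{i₁} Σ_{i₂} M i₁ i₂ (uU i₁ - uL i₁)(uU i₂ - uL i₂)`, if `u, v ∈ I`,
`δ > 0`, and `K ∈ [0,1]` satisfy `∇g(u)ᵀ(v-u) ≤ -δ`,
`g u + K Σ_i κ i |v i - u i| ≤ 0`, and `-g u ≤ 2δ²/Q̄`, then
`g (u + K • (v - u)) ≤ g u`. -/
theorem slack_nondecrease_near_active
    {n : ℕ} (uL uU : Fin n → ℝ)
    (g : (Fin n → ℝ) → ℝ)
    (U : Set (Fin n → ℝ)) (hUopen : IsOpen U) (hIU : Set.Icc uL uU ⊆ U)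
    (hg : ContDiffOn ℝ 2 g U)
    (κ : Fin n → ℝ) (hκpos : ∀ i, 0 < κ i)
    (hκ : ∀ u ∈ Set.Icc uL uU, ∀ i, |fderiv ℝ g u (Pi.single i 1)| < κ i)
    (M : Fin n → Fin n → ℝ) (hMpos : ∀ i₁ i₂, 0 < M i₁ i₂)
    (hM : ∀ u ∈ Set.Icc uL uU, ∀ i₁ i₂,
      |fderiv ℝ (fun x => fderiv ℝ g x (Pi.single i₁ 1)) u (Pi.single i₂ 1)| < M i₁ i₂)
    (u v : Fin n → ℝ) (hu : u ∈ Set.Icc uL uU) (hv : v ∈ Set.Icc uL uU)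
    (δ : ℝ) (hδ : 0 < δ)
    (K : ℝ) (hK : K ∈ Set.Icc (0 : ℝ) 1)
    (hdesc : fderiv ℝ g u (v - u) ≤ -δ)
    (hfeas : g u + K * ∑ i, κ i * |v i - u i| ≤ 0)
    (hslack : -g u ≤ 2 * δ ^ 2 /
      ∑ i₁, ∑ i₂, M i₁ i₂ * (uU i₁ - uL i₁) * (uU i₂ - uL i₂)) :
    g (u + K • (v - u)) ≤ g u := by
  set d : Fin n → ℝ := v - u with hd
  set Q : ℝ := ∑ i₁, ∑ i₂, M i₁ i₂ * (uU i₁ - uL i₁) * (uU i₂ - uL i₂) with hQdef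
  have hw : ∀ i, 0 ≤ uU i - uL i := fun i => by linarith [hu.1 i, hu.2 i]
  have hdabs : ∀ i, |d i| ≤ uU i - uL i := by
    intro i
    rw [abs_le]
    constructor
    · have : d i = v i - u i := rfl
      rw [this]; linarith [hv.1 i, hu.2 i]
    · have : d i = v i - u i := rfl
      rw [this]; linarith [hv.2 i, hu.1 i]
  -- nonnegativity of each Q term
  have hterm : ∀ i₁ i₂, (0:ℝ) ≤ M i₁ i₂ * (uU i₁ - uL i₁) * (uU i₂ - uL i₂) := by
    intro i₁ i₂
    exact mul_nonneg (mul_nonneg (hMpos i₁ i₂).le (hw i₁)) (hw i₂)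
  have hQnonneg : 0 ≤ Q :=
    Finset.sum_nonneg fun i₁ _ => Finset.sum_nonneg fun i₂ _ => hterm i₁ i₂
  -- Q = 0 case is contradictory
  rcases eq_or_lt_of_le hQnonneg with hQ0 | hQpos
  · exfalso
    have hall : ∀ i, uU i - uL i = 0 := by
      intro i
      have h1 : ∀ i₁ ∈ Finset.univ, (0:ℝ) ≤ ∑ i₂, M i₁ i₂ * (uU i₁ - uL i₁) * (uU i₂ - uL i₂) :=
        fun i₁ _ => Finset.sum_nonneg fun i₂ _ => hterm i₁ i₂
      have h2 := (Finset.sum_eq_zero_iff_of_nonneg h1).mp hQ0.symm i (Finset.mem_univ i)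
      have h3 := (Finset.sum_eq_zero_iff_of_nonneg (fun i₂ _ => hterm i i₂)).mp h2 i (Finset.mem_univ i)
      have hMp := hMpos i i
      have h4 : (uU i - uL i) * (uU i - uL i) = 0 := by
        rcases mul_eq_zero.mp h3 with h | h
        · rcases mul_eq_zero.mp h with h' | h'
          · exact absurd h' (ne_of_gt hMp)
          · rw [h', zero_mul]
        · rw [h, mul_zero]
      have := mul_self_eq_zero.mp h4
      linarith
    have hdz : d = 0 := by
      funext i
      have := hdabs i
      rw [hall i] at this
      have := abs_nonneg (d i)
      have : |d i| = 0 := le_antisymm (by linarith [hdabs i, hall i]) (abs_nonneg _)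
      simpa [abs_eq_zero] using this
    rw [hdz] at hdesc
    simp at hdesc
    linarith
  -- K = 0 case
  rcases eq_or_lt_of_le hK.1 with hK0 | hKpos
  · rw [← hK0]; simp
  -- differentiability facts
  have hmemU : ∀ x ∈ Set.Icc uL uU, x ∈ U := fun x hx => hIU hx
  have hdiffg : ∀ x ∈ U, DifferentiableAt ℝ g x := fun x hx =>
    ((hg.differentiableOn (by norm_num)).differentiableAt (hUopen.mem_nhds hx))
  have hgC1' : ContDiffOn ℝ 1 (fderiv ℝ g) U := hg.fderiv_of_isOpen hUopen (by norm_num)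
  have hdiffg' : ∀ x ∈ U, DifferentiableAt ℝ (fderiv ℝ g) x := fun x hx =>
    ((hgC1'.differentiableOn (by norm_num)).differentiableAt (hUopen.mem_nhds hx))
  -- the segment stays in the box
  have hγmem : ∀ t ∈ Set.Icc (0:ℝ) 1, u + t • d ∈ Set.Icc uL uU := by
    intro t ht
    have hconv := (convex_Icc uL uU) hu hv (by linarith [ht.2] : (0:ℝ) ≤ 1 - t) ht.1 (by ring)
    have : u + t • d = (1 - t) • u + t • v := by
      rw [hd]; module
    rw [this]; exact hconv
  -- second-derivative relation
  have key : ∀ x ∈ U, ∀ (e w : Fin n → ℝ),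
      fderiv ℝ (fun y => fderiv ℝ g y e) x w = (fderiv ℝ (fderiv ℝ g) x w) e := by
    intro x hx e w
    have h : HasFDerivAt (fun y => fderiv ℝ g y e)
        ((ContinuousLinearMap.apply ℝ ℝ e).comp (fderiv ℝ (fderiv ℝ g) x)) x :=
      (ContinuousLinearMap.apply ℝ ℝ e).hasFDerivAt.comp x (hdiffg' x hx).hasFDerivAt
    rw [h.fderiv]; rfl
  -- representation of d
  have hdrep : d = ∑ i, d i • (Pi.single i 1 : Fin n → ℝ) := by
    funext j
    simp [Finset.sum_apply, Pi.single_apply, mul_ite]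
  -- bound on second derivative along direction d
  have hbound : ∀ x ∈ Set.Icc uL uU, |(fderiv ℝ (fderiv ℝ g) x d) d| ≤ Q := by
    intro x hx
    set B := fderiv ℝ (fderiv ℝ g) x with hB
    have h2 : ∀ (L : (Fin n → ℝ) →L[ℝ] ℝ), L d = ∑ i, d i * L (Pi.single i 1) := by
      intro L
      conv_lhs => rw [hdrep]
      rw [map_sum]
      refine Finset.sum_congr rfl fun i _ => ?_
      rw [map_smul, smul_eq_mul]
    have h1 : B d = ∑ i, d i • B (Pi.single i 1) := by
      conv_lhs => rw [hdrep]
      rw [map_sum]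
      refine Finset.sum_congr rfl fun i _ => ?_
      rw [map_smul]
    have hexp : (B d) d = ∑ i₂, ∑ i₁, (d i₂ * d i₁) * (B (Pi.single i₂ 1)) (Pi.single i₁ 1) := by
      rw [h1, ContinuousLinearMap.sum_apply]
      refine Finset.sum_congr rfl fun i₂ _ => ?_
      rw [ContinuousLinearMap.smul_apply, smul_eq_mul, h2 (B (Pi.single i₂ 1)), Finset.mul_sum]
      refine Finset.sum_congr rfl fun i₁ _ => by ring
    rw [hexp]
    calc |∑ i₂, ∑ i₁, (d i₂ * d i₁) * (B (Pi.single i₂ 1)) (Pi.single i₁ 1)|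
        ≤ ∑ i₂, ∑ i₁, |(d i₂ * d i₁) * (B (Pi.single i₂ 1)) (Pi.single i₁ 1)| := by
          refine (Finset.abs_sum_le_sum_abs _ _).trans ?_
          exact Finset.sum_le_sum fun i₂ _ => Finset.abs_sum_le_sum_abs _ _
      _ ≤ ∑ i₂, ∑ i₁, M i₁ i₂ * (uU i₁ - uL i₁) * (uU i₂ - uL i₂) := by
          refine Finset.sum_le_sum fun i₂ _ => Finset.sum_le_sum fun i₁ _ => ?_
          have hMb : |(B (Pi.single i₂ 1)) (Pi.single i₁ 1)| ≤ M i₁ i₂ := by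
            have := hM x hx i₁ i₂
            rw [key x (hmemU x hx) (Pi.single i₁ 1) (Pi.single i₂ 1)] at this
            exact this.le
          rw [abs_mul, abs_mul]
          calc |d i₂| * |d i₁| * |(B (Pi.single i₂ 1)) (Pi.single i₁ 1)|
              ≤ (uU i₂ - uL i₂) * (uU i₁ - uL i₁) * (M i₁ i₂) := by
                apply mul_le_mul
                · exact mul_le_mul (hdabs i₂) (hdabs i₁) (abs_nonneg _) (hw i₂)
                · exact hMb
                · exact abs_nonneg _
                · exact mul_nonneg (hw i₂) (hw i₁)
            _ = M i₁ i₂ * (uU i₁ - uL i₁) * (uU i₂ - uL i₂) := by ring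
      _ = Q := by rw [hQdef, Finset.sum_comm]
  -- gradient bound: δ ≤ ∑ κ i |d i|
  have hgrad : δ ≤ ∑ i, κ i * |d i| := by
    have hexp : fderiv ℝ g u d = ∑ i, d i * fderiv ℝ g u (Pi.single i 1) := by
      conv_lhs => rw [hdrep, map_sum]
      refine Finset.sum_congr rfl fun i _ => ?_
      rw [map_smul]; rfl
    have h1 : δ ≤ |fderiv ℝ g u d| :=
      le_trans (by linarith) (neg_le_abs _)
    calc δ ≤ |fderiv ℝ g u d| := h1
      _ = |∑ i, d i * fderiv ℝ g u (Pi.single i 1)| := by rw [hexp]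
      _ ≤ ∑ i, |d i * fderiv ℝ g u (Pi.single i 1)| := Finset.abs_sum_le_sum_abs _ _
      _ ≤ ∑ i, κ i * |d i| := by
          refine Finset.sum_le_sum fun i _ => ?_
          rw [abs_mul, mul_comm]
          exact mul_le_mul (hκ u hu i).le le_rfl (abs_nonneg _) (hκpos i).le
  -- K * Q / 2 ≤ δ
  have hKQ : K * Q ≤ 2 * δ := by
    have h1 : K * δ ≤ K * ∑ i, κ i * |d i| :=
      mul_le_mul_of_nonneg_left hgrad hK.1
    have h2 : K * ∑ i, κ i * |d i| ≤ -g u := by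
      have : ∑ i, κ i * |d i| = ∑ i, κ i * |v i - u i| := by
        refine Finset.sum_congr rfl fun i _ => ?_; rfl
      rw [this]; linarith
    have h3 : K * δ ≤ 2 * δ ^ 2 / Q := le_trans (le_trans h1 h2) hslack
    rw [le_div_iff₀ hQpos] at h3
    nlinarith [hδ, hQpos, h3]
  -- derivative functions
  have hIccsub : Set.Icc (0:ℝ) K ⊆ Set.Icc (0:ℝ) 1 :=
    Set.Icc_subset_Icc le_rfl hK.2
  have hφd : ∀ t ∈ Set.Icc (0:ℝ) 1,
      HasDerivAt (fun s => g (u + s • d)) (fderiv ℝ g (u + t • d) d) t := by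
    intro t ht
    have hmem := hmemU _ (hγmem t ht)
    have hγ : HasDerivAt (fun s : ℝ => u + s • d) d t := by
      simpa using ((hasDerivAt_id t).smul_const d).const_add u
    exact (hdiffg _ hmem).hasFDerivAt.comp_hasDerivAt t hγ
  have hφ'd : ∀ t ∈ Set.Icc (0:ℝ) 1,
      HasDerivAt (fun s => fderiv ℝ g (u + s • d) d)
        ((fderiv ℝ (fderiv ℝ g) (u + t • d) d) d) t := by
    intro t ht
    have hmem := hmemU _ (hγmem t ht)
    have hγ : HasDerivAt (fun s : ℝ => u + s • d) d t := by
      simpa using ((hasDerivAt_id t).smul_const d).const_add u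
    have h1 : HasDerivAt (fun s : ℝ => fderiv ℝ g (u + s • d))
        (fderiv ℝ (fderiv ℝ g) (u + t • d) d) t :=
      (hdiffg' _ hmem).hasFDerivAt.comp_hasDerivAt t hγ
    have h2 := (ContinuousLinearMap.apply ℝ ℝ d).hasFDerivAt.comp_hasDerivAt t h1
    exact h2
  -- MVT on φ'
  have hφ'lip : ∀ t ∈ Set.Icc (0:ℝ) K,
      |fderiv ℝ g (u + t • d) d - fderiv ℝ g (u + (0:ℝ) • d) d| ≤ Q * (t - 0) := by
    intro t ht
    have := norm_image_sub_le_of_norm_deriv_le_segment'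
      (f := fun s => fderiv ℝ g (u + s • d) d)
      (f' := fun s => (fderiv ℝ (fderiv ℝ g) (u + s • d) d) d)
      (a := 0) (b := K) (C := Q)
      (fun x hx => ((hφ'd x (hIccsub hx)).hasDerivWithinAt))
      (fun x hx => by
        have hx1 : x ∈ Set.Icc (0:ℝ) 1 := hIccsub (Set.Ico_subset_Icc_self hx)
        simpa [Real.norm_eq_abs] using hbound _ (hγmem x hx1))
      t ht
    simpa [Real.norm_eq_abs] using this
  -- define w and show antitone
  set c : ℝ := fderiv ℝ g (u + (0:ℝ) • d) d with hc
  have hc0 : c = fderiv ℝ g u d := by rw [hc]; norm_num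
  set w : ℝ → ℝ := fun t => g (u + t • d) - t * c - Q * t ^ 2 / 2 with hwdef
  have hwderiv : ∀ t ∈ Set.Icc (0:ℝ) K,
      HasDerivAt w (fderiv ℝ g (u + t • d) d - c - Q * t) t := by
    intro t ht
    have h1 := hφd t (hIccsub ht)
    have h2 : HasDerivAt (fun s : ℝ => s * c) c t := by
      simpa using (hasDerivAt_id t).mul_const c
    have h3 : HasDerivAt (fun s : ℝ => Q * s ^ 2 / 2) (Q * t) t := by
      have := ((hasDerivAt_pow 2 t).const_mul Q).div_const 2
      simpa using this.congr_deriv (by ring)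
    exact (h1.sub h2).sub h3
  have hwanti : AntitoneOn w (Set.Icc 0 K) := by
    apply antitoneOn_of_deriv_nonpos (convex_Icc 0 K)
    · intro t ht
      exact (hwderiv t ht).continuousAt.continuousWithinAt
    · intro t ht
      rw [interior_Icc] at ht
      exact (hwderiv t (Set.Ioo_subset_Icc_self ht)).differentiableAt.differentiableWithinAt
    · intro t ht
      rw [interior_Icc] at ht
      rw [(hwderiv t (Set.Ioo_subset_Icc_self ht)).deriv]
      have := hφ'lip t (Set.Ioo_subset_Icc_self ht)
      have habs := abs_le.mp this
      nlinarith [ht.1, habs.1, habs.2]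
  have hwKle : w K ≤ w 0 := hwanti (Set.left_mem_Icc.mpr hK.1) (Set.right_mem_Icc.mpr hK.1) hK.1
  have hw0 : w 0 = g u := by simp [hwdef]
  have hwK : w K = g (u + K • d) - K * c - Q * K ^ 2 / 2 := rfl
  -- conclude
  have hfinal : g (u + K • d) ≤ g u + K * c + Q * K ^ 2 / 2 := by
    rw [hwK, hw0] at hwKle; linarith
  have hcle : c ≤ -δ := by rw [hc0]; exact hdesc
  calc g (u + K • d) ≤ g u + K * c + Q * K ^ 2 / 2 := hfinal
    _ ≤ g u + K * (-δ) + Q * K ^ 2 / 2 := by nlinarith [hK.1]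
    _ ≤ g u := by nlinarith [hKpos, hKQ]
end

section
/- (Invariant lower bound on constraint slack along the iterates.) Let g be C² on an open set containing the compact box I ⊂ ℝ^{n_u}, with strict univariate Lipschitz constants κ_i > 0 and strict second-derivative Lipschitz constants M_{i₁i₂} > 0 on I; let Q̄ be the worst-case quadratic growth bound. Let γ ∈ [0,1) and κ̃_i ≥ 0 satisfy |∂g/∂u_i| ≤ κ̃_i ≤ γκ_i on I. Fix ε > 0 and δ > 0. Let (u_k) ⊆ I, (v_k) ⊆ I, and K_k ∈ [0,1] satisfy u_{k+1} = u_k + K_k(v_k − u_k), and for every k: (i) g(u_k) + K_k Σ_i κ_i|v_{k,i} − u_{k,i}| ≤ 0, and (ii) if g(u_k) ≥ −ε then ∇g(u_k)ᵀ(v_k − u_k) ≤ −δ. If g(u_0) < 0, then for every k: −g(u_k) ≥ min[(1 − γ)ε, 2(1 − γ)δ²/Q̄, −g(u_0)]. -/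
/-!
Write `s k = -g (u k)` for the slack. Along the segment from `u k` to `u (k + 1)` the mean value
theorem and `|∂ᵢg| ≤ κ̃ᵢ ≤ γ κᵢ` bound the loss of slack by `γ K_k Σᵢ κᵢ |v_{k,i} - u_{k,i}|`,
which is at most `γ s k` by (i); hence `s (k + 1) ≥ (1 - γ) s k`, and this settles the case
`s k > ε`. If `s k ≤ ε`, Taylor's theorem and (ii) give `s (k + 1) ≥ s k + K_k δ - K_k² Q̄ / 2`.
Either `K_k Q̄ ≤ 2δ` and the slack does not decrease, or `K_k > 2δ / Q̄`; then (i), (ii) and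
`|∇g(u_k)ᵀ(v_k - u_k)| ≤ Σᵢ κᵢ |v_{k,i} - u_{k,i}|` yield `s k ≥ K_k δ > 2δ² / Q̄`, and the
contraction gives `s (k + 1) ≥ 2(1 - γ)δ² / Q̄`.
-/

open Finset Set

theorem sub_le_mul_sub_of_hasDerivAt_le {f f' : ℝ → ℝ} {a b C : ℝ} (hab : a ≤ b)
    (hf : ∀ t ∈ Icc a b, HasDerivAt f (f' t) t) (hC : ∀ t ∈ Icc a b, f' t ≤ C) :
    f b - f a ≤ C * (b - a) := by
  refine (convex_Icc a b).image_sub_le_mul_sub_of_deriv_le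
    (fun t ht => (hf t ht).continuousAt.continuousWithinAt)
    (fun t ht => (hf t (interior_subset ht)).differentiableAt.differentiableWithinAt)
    (fun t ht => (hf t (interior_subset ht)).deriv ▸ hC t (interior_subset ht))
    a (left_mem_Icc.2 hab) b (right_mem_Icc.2 hab) hab

theorem image_one_le_add_of_deriv2_le {f f' f'' : ℝ → ℝ} {B : ℝ}
    (hf : ∀ t ∈ Icc (0 : ℝ) 1, HasDerivAt f (f' t) t)
    (hf' : ∀ t ∈ Icc (0 : ℝ) 1, HasDerivAt f' (f'' t) t)
    (hB : ∀ t ∈ Icc (0 : ℝ) 1, f'' t ≤ B) :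
    f 1 ≤ f 0 + f' 0 + B / 2 := by
  have hf'_le : ∀ t ∈ Icc (0 : ℝ) 1, f' t - f' 0 - B * t ≤ 0 := fun t ht => by
    have := sub_le_mul_sub_of_hasDerivAt_le ht.1
      (fun s hs => hf' s ⟨hs.1, hs.2.trans ht.2⟩) (fun s hs => hB s ⟨hs.1, hs.2.trans ht.2⟩)
    linarith
  have hχ : ∀ t ∈ Icc (0 : ℝ) 1,
      HasDerivAt (fun t => f t - f' 0 * t - B / 2 * t ^ 2) (f' t - f' 0 - B * t) t := fun t ht => by
    refine (((hf t ht).sub ((hasDerivAt_id' t).const_mul (f' 0))).sub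
      ((hasDerivAt_pow 2 t).const_mul (B / 2))).congr_deriv ?_
    norm_num
    ring
  have := sub_le_mul_sub_of_hasDerivAt_le zero_le_one hχ hf'_le
  norm_num at this
  linarith

section Segment

variable {E : Type*} [NormedAddCommGroup E] [NormedSpace ℝ E] {f : E → ℝ} {x y : E}

theorem hasDerivAt_add_smul (x d : E) (t : ℝ) : HasDerivAt (fun s : ℝ => x + s • d) d t := by
  simpa using ((hasDerivAt_id t).smul_const d).const_add x

theorem apply_le_add_of_fderiv_apply_sub_le {C : ℝ}
    (hf : ∀ t ∈ Icc (0 : ℝ) 1, DifferentiableAt ℝ f (x + t • (y - x)))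
    (hC : ∀ t ∈ Icc (0 : ℝ) 1, fderiv ℝ f (x + t • (y - x)) (y - x) ≤ C) :
    f y ≤ f x + C := by
  have := sub_le_mul_sub_of_hasDerivAt_le zero_le_one
    (fun t ht => (hf t ht).hasFDerivAt.comp_hasDerivAt t (hasDerivAt_add_smul x (y - x) t)) hC
  simp only [Function.comp_apply, one_smul, zero_smul, add_zero, add_sub_cancel, mul_one,
    sub_zero] at this
  linarith

theorem fderiv_clm_apply_const {F G : Type*} [NormedAddCommGroup F] [NormedSpace ℝ F]
    [NormedAddCommGroup G] [NormedSpace ℝ G] {c : E → F →L[ℝ] G}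
    (hc : DifferentiableAt ℝ c x) (w : F) (d : E) :
    fderiv ℝ (fun z => c z w) x d = fderiv ℝ c x d w := by
  rw [fderiv_clm_apply hc (differentiableAt_const w), fderiv_fun_const]
  simp

theorem apply_le_add_fderiv_add_of_fderiv_fderiv_apply_sub_le {B : ℝ}
    (hf : ∀ t ∈ Icc (0 : ℝ) 1, ContDiffAt ℝ 2 f (x + t • (y - x)))
    (hB : ∀ t ∈ Icc (0 : ℝ) 1, fderiv ℝ (fderiv ℝ f) (x + t • (y - x)) (y - x) (y - x) ≤ B) :
    f y ≤ f x + fderiv ℝ f x (y - x) + B / 2 := by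
  have hline := hasDerivAt_add_smul x (y - x)
  have hderiv : ∀ t ∈ Icc (0 : ℝ) 1, HasDerivAt (fun t => f (x + t • (y - x)))
      (fderiv ℝ f (x + t • (y - x)) (y - x)) t := fun t ht =>
    ((hf t ht).differentiableAt (by norm_num)).hasFDerivAt.comp_hasDerivAt t (hline t)
  have hderiv2 : ∀ t ∈ Icc (0 : ℝ) 1, HasDerivAt (fun t => fderiv ℝ f (x + t • (y - x)) (y - x))
      (fderiv ℝ (fderiv ℝ f) (x + t • (y - x)) (y - x) (y - x)) t := fun t ht => by
    have hf' := ((hf t ht).fderiv_right (m := 1) le_rfl).differentiableAt one_ne_zero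
    have hcomp := hf'.hasFDerivAt.comp_hasDerivAt t (hline t)
    exact (hcomp.clm_apply (hasDerivAt_const t (y - x))).congr_deriv (by simp)
  simpa only [one_smul, zero_smul, add_zero, add_sub_cancel] using
    image_one_le_add_of_deriv2_le hderiv hderiv2 hB

end Segment

section Coordinates

variable {ι : Type*} [Fintype ι]

theorem sum_sum_mul_abs_mul_abs_le {M : ι → ι → ℝ} {d w : ι → ℝ} {c : ℝ}
    (hM : ∀ i j, 0 ≤ M i j) (hd : ∀ i, |d i| ≤ c * w i) :
    ∑ i, ∑ j, M i j * |d i| * |d j| ≤ c ^ 2 * ∑ i, ∑ j, M i j * w i * w j := by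
  calc ∑ i, ∑ j, M i j * |d i| * |d j| ≤ ∑ i, ∑ j, M i j * (c * w i) * (c * w j) :=
        sum_le_sum fun i _ => sum_le_sum fun j _ =>
          mul_le_mul (mul_le_mul_of_nonneg_left (hd i) (hM i j)) (hd j) (abs_nonneg _)
            (mul_nonneg (hM i j) ((abs_nonneg _).trans (hd i)))
    _ = c ^ 2 * ∑ i, ∑ j, M i j * w i * w j := by
        simp only [mul_sum]
        exact sum_congr rfl fun _ _ => sum_congr rfl fun _ _ => by ring

variable [DecidableEq ι]

theorem ContinuousLinearMap.abs_apply_le_sum_mul_abs (L : (ι → ℝ) →L[ℝ] ℝ) {c : ι → ℝ}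
    (hc : ∀ i, |L (Pi.single i 1)| ≤ c i) (d : ι → ℝ) : |L d| ≤ ∑ i, c i * |d i| := by
  calc |L d| = |∑ i, d i * L (Pi.single i 1)| := by
        have hd : d = ∑ i, d i • Pi.single i (1 : ℝ) := by ext j; simp [Pi.single_apply]
        conv_lhs => rw [hd]
        simp only [map_sum, map_smul, smul_eq_mul]
    _ ≤ ∑ i, |d i * L (Pi.single i 1)| := abs_sum_le_sum_abs _ _
    _ ≤ ∑ i, c i * |d i| := sum_le_sum fun i _ => by
        rw [abs_mul, mul_comm]
        gcongr
        exact hc i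

theorem abs_fderiv_fderiv_apply_le {f : (ι → ℝ) → ℝ} {x : ι → ℝ}
    (hf : DifferentiableAt ℝ (fderiv ℝ f) x) {M : ι → ι → ℝ}
    (hM : ∀ i₁ i₂,
      |fderiv ℝ (fun y => fderiv ℝ f y (Pi.single i₁ 1)) x (Pi.single i₂ 1)| ≤ M i₁ i₂)
    (d : ι → ℝ) :
    |fderiv ℝ (fderiv ℝ f) x d d| ≤ ∑ i₁, ∑ i₂, M i₁ i₂ * |d i₁| * |d i₂| := by
  have hrow : ∀ i₁, |fderiv ℝ (fderiv ℝ f) x d (Pi.single i₁ 1)| ≤ ∑ i₂, M i₁ i₂ * |d i₂| :=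
    fun i₁ => by
      rw [← fderiv_clm_apply_const hf]
      exact ContinuousLinearMap.abs_apply_le_sum_mul_abs _ (hM i₁) d
  calc |fderiv ℝ (fderiv ℝ f) x d d| ≤ ∑ i₁, (∑ i₂, M i₁ i₂ * |d i₂|) * |d i₁| :=
        ContinuousLinearMap.abs_apply_le_sum_mul_abs _ hrow d
    _ = ∑ i₁, ∑ i₂, M i₁ i₂ * |d i₁| * |d i₂| := by
        simp only [sum_mul]
        exact sum_congr rfl fun _ _ => sum_congr rfl fun _ _ => by ring

variable {f : (ι → ℝ) → ℝ} {S : Set (ι → ℝ)} {x y : ι → ℝ}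

theorem Convex.apply_le_add_sum_mul_abs_sub (hS : Convex ℝ S) (hx : x ∈ S) (hy : y ∈ S)
    (hf : ∀ z ∈ S, DifferentiableAt ℝ f z) {c : ι → ℝ}
    (hc : ∀ z ∈ S, ∀ i, |fderiv ℝ f z (Pi.single i 1)| ≤ c i) :
    f y ≤ f x + ∑ i, c i * |y i - x i| := by
  have hseg : ∀ t ∈ Icc (0 : ℝ) 1, x + t • (y - x) ∈ S := fun t ht => hS.add_smul_sub_mem hx hy ht
  refine apply_le_add_of_fderiv_apply_sub_le (fun t ht => hf _ (hseg t ht)) fun t ht => ?_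
  exact (le_abs_self _).trans
    (ContinuousLinearMap.abs_apply_le_sum_mul_abs _ (hc _ (hseg t ht)) (y - x))

theorem Convex.apply_le_add_fderiv_add_sum_sum (hS : Convex ℝ S) (hx : x ∈ S) (hy : y ∈ S)
    (hf : ∀ z ∈ S, ContDiffAt ℝ 2 f z) {M : ι → ι → ℝ}
    (hM : ∀ z ∈ S, ∀ i₁ i₂,
      |fderiv ℝ (fun w => fderiv ℝ f w (Pi.single i₁ 1)) z (Pi.single i₂ 1)| ≤ M i₁ i₂) :
    f y ≤ f x + fderiv ℝ f x (y - x) +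
      (∑ i₁, ∑ i₂, M i₁ i₂ * |y i₁ - x i₁| * |y i₂ - x i₂|) / 2 := by
  have hseg : ∀ t ∈ Icc (0 : ℝ) 1, x + t • (y - x) ∈ S := fun t ht => hS.add_smul_sub_mem hx hy ht
  refine apply_le_add_fderiv_add_of_fderiv_fderiv_apply_sub_le (fun t ht => hf _ (hseg t ht))
    fun t ht => ?_
  have hf' := ((hf _ (hseg t ht)).fderiv_right (m := 1) le_rfl).differentiableAt one_ne_zero
  exact (le_abs_self _).trans (abs_fderiv_fderiv_apply_le hf' (hM _ (hseg t ht)) (y - x))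

end Coordinates

theorem min_le_of_contraction_of_descent {s K : ℕ → ℝ} {γ ε δ Q : ℝ} (hγ : γ ≤ 1) (hδ : 0 ≤ δ)
    (hK : ∀ k, 0 ≤ K k) (hcontr : ∀ k, (1 - γ) * s k ≤ s (k + 1))
    (hfeas : ∀ k, s k ≤ ε → K k * δ ≤ s k)
    (hdesc : ∀ k, s k ≤ ε → s k + K k * δ - K k ^ 2 * Q / 2 ≤ s (k + 1)) :
    ∀ k, min ((1 - γ) * ε) (min (2 * (1 - γ) * δ ^ 2 / Q) (s 0)) ≤ s k := by
  intro k
  induction k with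
  | zero => exact (min_le_right _ _).trans (min_le_right _ _)
  | succ k ih =>
    have hγ' : 0 ≤ 1 - γ := by linarith
    rcases lt_or_ge ε (s k) with hfar | hnear
    · exact (min_le_left _ _).trans ((mul_le_mul_of_nonneg_left hfar.le hγ').trans (hcontr k))
    rcases le_or_gt (K k * Q) (2 * δ) with hshort | hlong
    · have hmono : s k ≤ s (k + 1) := by
        nlinarith [hdesc k hnear, mul_nonneg (hK k) (sub_nonneg.2 hshort)]
      exact ih.trans hmono
    have hQ : 0 < Q := pos_of_mul_pos_right (by linarith) (hK k)
    have hslack : 2 * δ ^ 2 / Q ≤ s k := by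
      rw [div_le_iff₀ hQ]
      nlinarith [mul_le_mul_of_nonneg_right (hfeas k hnear) hQ.le,
        mul_le_mul_of_nonneg_left hlong.le hδ]
    calc _ ≤ 2 * (1 - γ) * δ ^ 2 / Q := (min_le_right _ _).trans (min_le_left _ _)
      _ = (1 - γ) * (2 * δ ^ 2 / Q) := by ring
      _ ≤ (1 - γ) * s k := by gcongr
      _ ≤ s (k + 1) := hcontr k

theorem invariant_slack_lower_bound_general
    {n : ℕ} (uL uU : Fin n → ℝ)
    (g : (Fin n → ℝ) → ℝ)
    (U : Set (Fin n → ℝ)) (hUopen : IsOpen U) (hIU : Set.Icc uL uU ⊆ U)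
    (hg : ContDiffOn ℝ 2 g U)
    (κ : Fin n → ℝ)
    (hκ : ∀ u ∈ Set.Icc uL uU, ∀ i, |fderiv ℝ g u (Pi.single i 1)| < κ i)
    (M : Fin n → Fin n → ℝ)
    (hM : ∀ u ∈ Set.Icc uL uU, ∀ i₁ i₂,
      |fderiv ℝ (fun x => fderiv ℝ g x (Pi.single i₁ 1)) u (Pi.single i₂ 1)| < M i₁ i₂)
    (γ : ℝ) (hγ : γ ∈ Set.Ico (0 : ℝ) 1)
    (κt : Fin n → ℝ)
    (hκt : ∀ u ∈ Set.Icc uL uU, ∀ i, |fderiv ℝ g u (Pi.single i 1)| ≤ κt i)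
    (hκtγ : ∀ i, κt i ≤ γ * κ i)
    (ε δ : ℝ) (hδ : 0 < δ)
    (u v : ℕ → (Fin n → ℝ)) (K : ℕ → ℝ)
    (huI : ∀ k, u k ∈ Set.Icc uL uU) (hvI : ∀ k, v k ∈ Set.Icc uL uU)
    (hKmem : ∀ k, K k ∈ Set.Icc (0 : ℝ) 1)
    (hupd : ∀ k, u (k + 1) = u k + K k • (v k - u k))
    (hfeas : ∀ k, g (u k) + K k * ∑ i, κ i * |v k i - u k i| ≤ 0)
    (hdesc : ∀ k, g (u k) ≥ -ε → fderiv ℝ g (u k) (v k - u k) ≤ -δ) :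
    ∀ k, min ((1 - γ) * ε)
        (min (2 * (1 - γ) * δ ^ 2 /
            ∑ i₁, ∑ i₂, M i₁ i₂ * (uU i₁ - uL i₁) * (uU i₂ - uL i₂))
          (-g (u 0)))
      ≤ -g (u k) := by
  have hI : Convex ℝ (Icc uL uU) := convex_Icc uL uU
  have hg2 : ∀ z ∈ Icc uL uU, ContDiffAt ℝ 2 g z :=
    fun z hz => hg.contDiffAt (hUopen.mem_nhds (hIU hz))
  have hK := fun k => (hKmem k).1
  have hincr : ∀ k i, |u (k + 1) i - u k i| = K k * |v k i - u k i| := fun k i => by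
    simp [hupd k, abs_mul, abs_of_nonneg (hK k)]
  refine min_le_of_contraction_of_descent (s := fun k => -g (u k)) hγ.2.le hδ.le hK
    (fun k => ?_) (fun k hk => ?_) (fun k hk => ?_)
  · have hmvt := hI.apply_le_add_sum_mul_abs_sub (huI k) (huI (k + 1))
      (fun z hz => (hg2 z hz).differentiableAt (by norm_num)) hκt
    have hγκ : ∑ i, κt i * |u (k + 1) i - u k i| ≤ γ * (K k * ∑ i, κ i * |v k i - u k i|) := by
      simp only [hincr, mul_sum]
      exact sum_le_sum fun i _ => (mul_le_mul_of_nonneg_right (hκtγ i)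
        (mul_nonneg (hK k) (abs_nonneg _))).trans_eq (by ring)
    nlinarith [hfeas k, hγ.1]
  · have hgrad := neg_le_of_abs_le (ContinuousLinearMap.abs_apply_le_sum_mul_abs _
      (fun i => (hκ (u k) (huI k) i).le) (v k - u k))
    simp only [Pi.sub_apply] at hgrad
    nlinarith [hdesc k (by linarith), hfeas k, hK k]
  · have hM0 : ∀ i₁ i₂, 0 ≤ M i₁ i₂ := fun i₁ i₂ => (abs_nonneg _).trans (hM _ (huI 0) i₁ i₂).le
    have hwidth : ∀ i, |u (k + 1) i - u k i| ≤ K k * (uU i - uL i) := fun i => by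
      rw [hincr, ← Real.dist_eq]
      exact mul_le_mul_of_nonneg_left (Real.dist_le_of_mem_Icc ⟨(hvI k).1 i, (hvI k).2 i⟩
        ⟨(huI k).1 i, (huI k).2 i⟩) (hK k)
    have htaylor := hI.apply_le_add_fderiv_add_sum_sum (huI k) (huI (k + 1)) hg2
      (fun z hz i₁ i₂ => (hM z hz i₁ i₂).le)
    have hquad := sum_sum_mul_abs_mul_abs_le hM0 hwidth
    have hlin : fderiv ℝ g (u k) (u (k + 1) - u k) = K k * fderiv ℝ g (u k) (v k - u k) := by
      rw [hupd k, add_sub_cancel_left, map_smul, smul_eq_mul]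
    nlinarith [hdesc k (by linarith), hK k]

/-- Invariant lower bound on constraint slack along the iterates:
under the project-and-filter recursion `u (k+1) = u k + K k • (v k - u k)` with
(i) `g (u k) + K k Σ_i κ i |v k i - u k i| ≤ 0` and (ii) the descent condition
`∇g(u k)ᵀ(v k - u k) ≤ -δ` whenever `g (u k) ≥ -ε`, and with `|∂g/∂u_i| ≤ κ̃ i ≤ γ κ i`
on `I`, `γ ∈ [0,1)`, `g (u 0) < 0`, one has for every `k`:
`-g (u k) ≥ min [(1-γ)ε, 2(1-γ)δ²/Q̄, -g (u 0)]`. -/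
theorem invariant_slack_lower_bound
    {n : ℕ} (uL uU : Fin n → ℝ)
    (g : (Fin n → ℝ) → ℝ)
    (U : Set (Fin n → ℝ)) (hUopen : IsOpen U) (hIU : Set.Icc uL uU ⊆ U)
    (hg : ContDiffOn ℝ 2 g U)
    (κ : Fin n → ℝ) (hκpos : ∀ i, 0 < κ i)
    (hκ : ∀ u ∈ Set.Icc uL uU, ∀ i, |fderiv ℝ g u (Pi.single i 1)| < κ i)
    (M : Fin n → Fin n → ℝ) (hMpos : ∀ i₁ i₂, 0 < M i₁ i₂)
    (hM : ∀ u ∈ Set.Icc uL uU, ∀ i₁ i₂,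
      |fderiv ℝ (fun x => fderiv ℝ g x (Pi.single i₁ 1)) u (Pi.single i₂ 1)| < M i₁ i₂)
    (γ : ℝ) (hγ : γ ∈ Set.Ico (0 : ℝ) 1)
    (κt : Fin n → ℝ)
    (hκt : ∀ u ∈ Set.Icc uL uU, ∀ i, |fderiv ℝ g u (Pi.single i 1)| ≤ κt i)
    (hκtγ : ∀ i, κt i ≤ γ * κ i)
    (ε δ : ℝ) (hε : 0 < ε) (hδ : 0 < δ)
    (u v : ℕ → (Fin n → ℝ)) (K : ℕ → ℝ)
    (huI : ∀ k, u k ∈ Set.Icc uL uU) (hvI : ∀ k, v k ∈ Set.Icc uL uU)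
    (hKmem : ∀ k, K k ∈ Set.Icc (0 : ℝ) 1)
    (hupd : ∀ k, u (k + 1) = u k + K k • (v k - u k))
    (hfeas : ∀ k, g (u k) + K k * ∑ i, κ i * |v k i - u k i| ≤ 0)
    (hdesc : ∀ k, g (u k) ≥ -ε → fderiv ℝ g (u k) (v k - u k) ≤ -δ)
    (h0 : g (u 0) < 0) :
    ∀ k, min ((1 - γ) * ε)
        (min (2 * (1 - γ) * δ ^ 2 /
            ∑ i₁, ∑ i₂, M i₁ i₂ * (uU i₁ - uL i₁) * (uU i₂ - uL i₂))
          (-g (u 0)))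
      ≤ -g (u k) :=
  invariant_slack_lower_bound_general uL uU g U hUopen hIU hg κ hκ M hM γ hγ κt hκt hκtγ ε δ hδ u v
    K huI hvI hKmem hupd hfeas hdesc
end

section
/- (Quantitative static form of Theorem 5: small Fritz John error at a point where the projection is infeasible.) Consider the problem: minimize φ(u) subject to g_{p,j}(u) ≤ 0 (j = 1,...,n_{g_p}), g_j(u) ≤ 0 (j = 1,...,n_g), u^L ⪯ u ⪯ u^U, with all functions C¹ on an open set containing I = {u : u^L ⪯ u ⪯ u^U}. Let u ∈ I be feasible, and let ε_{p,j}, ε_j, δ_{g_p,j}, δ_{g,j}, δ_φ > 0. Suppose there is no d ∈ ℝ^{n_u} satisfying simultaneously: ∇g_{p,j}(u)ᵀ d ≤ −δ_{g_p,j} for every j with g_{p,j}(u) ≥ −ε_{p,j}; ∇g_j(u)ᵀ d ≤ −δ_{g,j} for every j with g_j(u) ≥ −ε_j; ∇φ(u)ᵀ d ≤ −δ_φ; d_i ≥ 0 for every i with u_i = u^L_i; and d_i ≤ 0 for every i with u_i = u^U_i. Then the Fritz John error (defined with Euclidean normalization of the multipliers) satisfies ℰ(u) ≤ max( max_{j}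 ε_{p,j}², max_{j} ε_j² ). -/
/-!
Scaling the direction `d` turns infeasibility of the projection system into infeasibility of the
homogeneous strict system `∇g(u)ᵀd < 0` (for the objective and the `ε`-active constraints) over
the directions allowed by the active bounds. Separating the compact convex hull of the active
gradients from minus the closed normal cone of the box (Farkas' lemma) then yields multipliers
that vanish on the inactive constraints and satisfy stationarity and complementarity for the
bounds exactly. After Euclidean normalization the only terms left in the Fritz John error are
`(μ_j g_j(u))²` for active `j`, where `-ε_j ≤ g_j(u) ≤ 0`, so the error is at most
`max_j ε_j² · ∑_j μ_j² ≤ max_j ε_j²`.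
-/

open Finset Matrix

theorem ProperCone.exists_mem_stdSimplex_sum_smul_mem
    {E ι : Type*} [AddCommGroup E] [TopologicalSpace E] [IsTopologicalAddGroup E]
    [Module ℝ E] [ContinuousSMul ℝ E] [LocallyConvexSpace ℝ E] [Fintype ι]
    (C : ProperCone ℝ E) (b : ι → E)
    (h : ¬∃ f : StrongDual ℝ E, (∀ x ∈ C, 0 ≤ f x) ∧ ∀ k, f (b k) < 0) :
    ∃ w ∈ stdSimplex ℝ ι, ∑ k, w k • b k ∈ C := by
  classical
  by_contra! hC
  let K := Fintype.linearCombination ℝ b '' stdSimplex ℝ ι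
  have hK : IsCompact K := (isCompact_stdSimplex ℝ ι).image (LinearMap.continuous_on_pi _)
  have hKC : Disjoint K C := by
    rw [Set.disjoint_left]
    rintro _ ⟨w, hw, rfl⟩
    simpa [Fintype.linearCombination_apply] using hC w hw
  obtain ⟨f, hfC, hfK⟩ :=
    C.hyperplane_separation ((convex_stdSimplex ℝ ι).linear_image _) hK hKC
  refine h ⟨f, hfC, fun k => hfK _ ⟨Pi.single k 1, single_mem_stdSimplex ℝ k, ?_⟩⟩
  simp [Fintype.linearCombination_apply_single]

theorem LinearMap.apply_eq_dotProduct {ι R : Type*} [Fintype ι] [DecidableEq ι] [CommSemiring R]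
    (f : (ι → R) →ₗ[R] R) (x : ι → R) : f x = x ⬝ᵥ fun i => f (Pi.single i 1) := by
  conv_lhs => rw [← LinearEquiv.symm_apply_apply (LinearEquiv.piRing R R ι R) f]
  rw [LinearEquiv.piRing_symm_apply]
  simp only [LinearEquiv.piRing_apply, smul_eq_mul, dotProduct]

theorem Fintype.sum_dite_eq_sum_subtype {κ M : Type*} [Fintype κ] [AddCommMonoid M]
    (P : κ → Prop) [DecidablePred P] (f : {k // P k} → M) :
    ∑ k, (if hk : P k then f ⟨k, hk⟩ else 0) = ∑ k, f k := by
  rw [← Fintype.sum_subtype_add_sum_subtype P]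
  have : ∑ k : {k // ¬P k}, (if hk : P k then f ⟨k, hk⟩ else 0) = 0 :=
    Finset.sum_eq_zero fun k _ => dif_neg k.2
  simp [Subtype.prop, this]

theorem exists_nonneg_forall_mul_le_of_neg {κ : Type*} [Fintype κ] (a δ : κ → ℝ) :
    ∃ t : ℝ, 0 ≤ t ∧ ∀ k, a k < 0 → t * a k ≤ -δ k := by
  refine ⟨∑ k, |δ k| / |a k|, by positivity, fun k hk => ?_⟩
  have hak : 0 < |a k| := abs_pos.2 hk.ne
  have ht : |δ k| / |a k| ≤ ∑ k, |δ k| / |a k| :=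
    single_le_sum (f := fun k => |δ k| / |a k|) (fun k _ => by positivity) (mem_univ k)
  rw [div_le_iff₀ hak, abs_of_neg hk] at ht
  linarith [le_abs_self (δ k)]

theorem sq_mul_le_of_neg_le_or_eq_zero {μ c ε M : ℝ} (hc : c ≤ 0) (hεM : ε ^ 2 ≤ M)
    (h : -ε ≤ c ∨ μ = 0) : (μ * c) ^ 2 ≤ M * μ ^ 2 := by
  rcases h with hcε | rfl
  · rw [mul_pow, mul_comm M]
    exact mul_le_mul_of_nonneg_left ((sq_le_sq' hcε (by linarith)).trans hεM) (sq_nonneg μ)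
  · simp

/-- For `u` in the box `uL ≤ u ≤ uU`, this is the normal cone of the box at `u`. -/
def boxNormalCone {ι : Type*} (uL uU u : ι → ℝ) : ProperCone ℝ (ι → ℝ) where
  carrier := {v | ∀ i, (u i ≠ uL i → 0 ≤ v i) ∧ (u i ≠ uU i → v i ≤ 0)}
  add_mem' hv hw i :=
    ⟨fun h => add_nonneg ((hv i).1 h) ((hw i).1 h), fun h => add_nonpos ((hv i).2 h) ((hw i).2 h)⟩
  zero_mem' i := ⟨fun _ => le_rfl, fun _ => le_rfl⟩
  smul_mem' c v hv i :=
    ⟨fun h => mul_nonneg c.2 ((hv i).1 h), fun h => mul_nonpos_of_nonneg_of_nonpos c.2 ((hv i).2 h)⟩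
  isClosed' := by
    rw [Set.ofPred_forall]
    refine isClosed_iInter fun i => ?_
    rw [Set.ofPred_and]
    exact (isClosed_imp isOpen_const (isClosed_le continuous_const (continuous_apply i))).inter
      (isClosed_imp isOpen_const (isClosed_le (continuous_apply i) continuous_const))

theorem mem_boxNormalCone {ι : Type*} {uL uU u v : ι → ℝ} :
    v ∈ boxNormalCone uL uU u ↔ ∀ i, (u i ≠ uL i → 0 ≤ v i) ∧ (u i ≠ uU i → v i ≤ 0) :=
  Iff.rfl

theorem exists_bound_multipliers_of_mem_boxNormalCone {ι : Type*} {uL uU u v : ι → ℝ}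
    (hv : v ∈ boxNormalCone uL uU u) :
    ∃ ζL ζU : ι → ℝ, (∀ i, 0 ≤ ζL i) ∧ (∀ i, 0 ≤ ζU i) ∧ v = ζU - ζL ∧
      (∀ i, ζL i * (uL i - u i) = 0) ∧ ∀ i, ζU i * (u i - uU i) = 0 := by
  refine ⟨fun i => max (-v i) 0, fun i => max (v i) 0, fun i => le_max_right _ _,
    fun i => le_max_right _ _, funext fun i => (max_zero_sub_max_neg_zero_eq_self (v i)).symm,
    fun i => ?_, fun i => ?_⟩
  · by_cases h : u i = uL i
    · simp [h]
    · simp [(mem_boxNormalCone.1 hv i).1 h]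
  · by_cases h : u i = uU i
    · simp [h]
    · simp [(mem_boxNormalCone.1 hv i).2 h]

theorem exists_fritzJohn_weights_of_infeasible {ι κ : Type*} [Fintype ι] [DecidableEq ι]
    [Fintype κ] (G : κ → ι → ℝ) (δ : κ → ℝ) (P : κ → Prop) (uL uU u : ι → ℝ)
    (h : ¬∃ d : ι → ℝ, (∀ k, P k → G k ⬝ᵥ d ≤ -δ k) ∧
      (∀ i, u i = uL i → 0 ≤ d i) ∧ (∀ i, u i = uU i → d i ≤ 0)) :
    ∃ w : κ → ℝ, (∀ k, 0 ≤ w k) ∧ (∀ k, ¬P k → w k = 0) ∧ ∑ k, w k = 1 ∧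
      -∑ k, w k • G k ∈ boxNormalCone uL uU u := by
  classical
  -- A separating functional `x ↦ x ⬝ᵥ g` makes `-g`, suitably scaled, a solution of the system.
  have hsep : ¬∃ f : StrongDual ℝ (ι → ℝ), (∀ x ∈ boxNormalCone uL uU u, 0 ≤ f x) ∧
      ∀ k : {k // P k}, f (-G k) < 0 := by
    rintro ⟨f, hfN, hfG⟩
    set g : ι → ℝ := fun i => f (Pi.single i 1)
    have hf : ∀ x, f x = x ⬝ᵥ g := (f : (ι → ℝ) →ₗ[ℝ] ℝ).apply_eq_dotProduct
    have hGg : ∀ k, P k → -(G k ⬝ᵥ g) < 0 := fun k hk => by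
      simpa [hf] using hfG ⟨k, hk⟩
    obtain ⟨t, ht, hta⟩ := exists_nonneg_forall_mul_le_of_neg (fun k => -(G k ⬝ᵥ g)) δ
    refine h ⟨-(t • g), fun k hk => ?_, fun i hi => ?_, fun i hi => ?_⟩
    · simpa [dotProduct_smul] using hta k (hGg k hk)
    · have hmem : -Pi.single i 1 ∈ boxNormalCone uL uU u := mem_boxNormalCone.2 fun j => by
        by_cases hj : j = i
        · subst hj; simp [hi]
        · simp [hj]
      have := hfN _ hmem
      simp only [map_neg, neg_nonneg] at this
      simpa using mul_nonpos_of_nonneg_of_nonpos ht this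
    · have hmem : Pi.single i 1 ∈ boxNormalCone uL uU u := mem_boxNormalCone.2 fun j => by
        by_cases hj : j = i
        · subst hj; simp [hi]
        · simp [hj]
      simpa using mul_nonneg ht (hfN _ hmem)
  obtain ⟨w, ⟨hw0, hw1⟩, hwN⟩ :=
    (boxNormalCone uL uU u).exists_mem_stdSimplex_sum_smul_mem (fun k : {k // P k} => -G k) hsep
  refine ⟨fun k => if hk : P k then w ⟨k, hk⟩ else 0, fun k => ?_, fun k hk => dif_neg hk,
    ?_, ?_⟩
  · dsimp only
    split_ifs
    exacts [hw0 _, le_rfl]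
  · rwa [Fintype.sum_dite_eq_sum_subtype]
  · simp only [dite_smul, zero_smul]
    rw [Fintype.sum_dite_eq_sum_subtype P fun k => w k • G k]
    simpa only [smul_neg, sum_neg_distrib] using hwN

section FritzJohnError

variable {ι κp κn : Type*} [Fintype ι] [Fintype κp] [Fintype κn]
  (Gφ : ι → ℝ) (Gp : κp → ι → ℝ) (Gn : κn → ι → ℝ) (cp : κp → ℝ) (cn : κn → ℝ)
  (uL uU u : ι → ℝ)

/-- `Gφ`, `Gp j`, `Gn j` stand for the gradients and `cp j`, `cn j` for the constraint values
at `u`. -/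
def fritzJohnResidual (μφ : ℝ) (μp : κp → ℝ) (μn : κn → ℝ) (ζL ζU : ι → ℝ) : ℝ :=
  (∑ i, (μφ * Gφ i + (∑ j, μp j * Gp j i) + (∑ j, μn j * Gn j i) - ζL i + ζU i) ^ 2) +
    (∑ j, (μp j * cp j) ^ 2) + (∑ j, (μn j * cn j) ^ 2) +
    ∑ i, ((ζL i * (uL i - u i)) ^ 2 + (ζU i * (u i - uU i)) ^ 2)

def multiplierNormSq (μφ : ℝ) (μp : κp → ℝ) (μn : κn → ℝ) (ζL ζU : ι → ℝ) : ℝ :=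
  μφ ^ 2 + ∑ j, μp j ^ 2 + ∑ j, μn j ^ 2 + ∑ i, ζL i ^ 2 + ∑ i, ζU i ^ 2

noncomputable def fritzJohnError : ℝ :=
  sInf {E : ℝ | ∃ (μφ : ℝ) (μp : κp → ℝ) (μn : κn → ℝ) (ζL ζU : ι → ℝ),
    0 ≤ μφ ∧ (∀ j, 0 ≤ μp j) ∧ (∀ j, 0 ≤ μn j) ∧ (∀ i, 0 ≤ ζL i) ∧ (∀ i, 0 ≤ ζU i) ∧
    multiplierNormSq μφ μp μn ζL ζU = 1 ∧
    E = fritzJohnResidual Gφ Gp Gn cp cn uL uU u μφ μp μn ζL ζU}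

variable {Gφ Gp Gn cp cn uL uU u} (μφ : ℝ) (μp : κp → ℝ) (μn : κn → ℝ) (ζL ζU : ι → ℝ)

theorem fritzJohnResidual_nonneg :
    0 ≤ fritzJohnResidual Gφ Gp Gn cp cn uL uU u μφ μp μn ζL ζU := by
  unfold fritzJohnResidual
  positivity

theorem fritzJohnResidual_smul (c : ℝ) :
    fritzJohnResidual Gφ Gp Gn cp cn uL uU u (c * μφ) (c • μp) (c • μn) (c • ζL) (c • ζU) =
      c ^ 2 * fritzJohnResidual Gφ Gp Gn cp cn uL uU u μφ μp μn ζL ζU := by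
  simp only [fritzJohnResidual, Pi.smul_apply, smul_eq_mul, mul_assoc, ← mul_sum, ← mul_sub,
    ← mul_add, mul_pow]

theorem multiplierNormSq_smul (c : ℝ) :
    multiplierNormSq (c * μφ) (c • μp) (c • μn) (c • ζL) (c • ζU) =
      c ^ 2 * multiplierNormSq μφ μp μn ζL ζU := by
  simp only [multiplierNormSq, Pi.smul_apply, smul_eq_mul, mul_pow, ← mul_sum]
  ring

variable {μφ μp μn ζL ζU}

theorem fritzJohnResidual_le_mul_multiplierNormSq {M : ℝ} (hM : 0 ≤ M)
    (hstat : μφ • Gφ + ∑ j, μp j • Gp j + ∑ j, μn j • Gn j = ζL - ζU)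
    (hL : ∀ i, ζL i * (uL i - u i) = 0) (hU : ∀ i, ζU i * (u i - uU i) = 0)
    (hp : ∀ j, (μp j * cp j) ^ 2 ≤ M * μp j ^ 2) (hn : ∀ j, (μn j * cn j) ^ 2 ≤ M * μn j ^ 2) :
    fritzJohnResidual Gφ Gp Gn cp cn uL uU u μφ μp μn ζL ζU ≤
      M * multiplierNormSq μφ μp μn ζL ζU := by
  have hstat' : ∀ i, μφ * Gφ i + ∑ j, μp j * Gp j i + ∑ j, μn j * Gn j i - ζL i + ζU i = 0 := by
    intro i
    have := congrFun hstat i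
    simp only [Pi.add_apply, Pi.sub_apply, Pi.smul_apply, smul_eq_mul, Finset.sum_apply] at this
    linarith
  have hpM := sum_le_sum fun j (_ : j ∈ univ) => hp j
  have hnM := sum_le_sum fun j (_ : j ∈ univ) => hn j
  rw [← mul_sum] at hpM hnM
  have hrest : 0 ≤ M * (μφ ^ 2 + ∑ i, ζL i ^ 2 + ∑ i, ζU i ^ 2) := by positivity
  simp only [fritzJohnResidual, multiplierNormSq, hstat', hL, hU, ne_eq, OfNat.ofNat_ne_zero,
    not_false_eq_true, zero_pow, add_zero, sum_const_zero, zero_add]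
  linarith

theorem fritzJohnError_le_of_residual_le {M : ℝ} (hμφ : 0 ≤ μφ) (hμp : ∀ j, 0 ≤ μp j)
    (hμn : ∀ j, 0 ≤ μn j) (hζL : ∀ i, 0 ≤ ζL i) (hζU : ∀ i, 0 ≤ ζU i)
    (hpos : 0 < multiplierNormSq μφ μp μn ζL ζU)
    (hres : fritzJohnResidual Gφ Gp Gn cp cn uL uU u μφ μp μn ζL ζU ≤
      M * multiplierNormSq μφ μp μn ζL ζU) :
    fritzJohnError Gφ Gp Gn cp cn uL uU u ≤ M := by
  set c := (√(multiplierNormSq μφ μp μn ζL ζU))⁻¹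
  have hc : 0 ≤ c := by positivity
  have hc2 : c ^ 2 * multiplierNormSq μφ μp μn ζL ζU = 1 := by
    rw [inv_pow, Real.sq_sqrt hpos.le, inv_mul_cancel₀ hpos.ne']
  refine csInf_le_of_le ⟨0, ?_⟩ ⟨c * μφ, c • μp, c • μn, c • ζL, c • ζU, mul_nonneg hc hμφ,
    fun j => mul_nonneg hc (hμp j), fun j => mul_nonneg hc (hμn j),
    fun i => mul_nonneg hc (hζL i), fun i => mul_nonneg hc (hζU i),
    by rw [multiplierNormSq_smul, hc2], rfl⟩ ?_
  · rintro _ ⟨_, _, _, _, _, -, -, -, -, -, -, rfl⟩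
    exact fritzJohnResidual_nonneg ..
  · calc fritzJohnResidual Gφ Gp Gn cp cn uL uU u (c * μφ) (c • μp) (c • μn) (c • ζL) (c • ζU)
        = c ^ 2 * fritzJohnResidual Gφ Gp Gn cp cn uL uU u μφ μp μn ζL ζU :=
          fritzJohnResidual_smul ..
      _ ≤ c ^ 2 * (M * multiplierNormSq μφ μp μn ζL ζU) := by gcongr
      _ = M := by rw [mul_left_comm, hc2, mul_one]

end FritzJohnError

theorem fritzJohnError_le_of_infeasible {ι κp κn : Type*} [Fintype ι] [DecidableEq ι]
    [Fintype κp] [Fintype κn] {Gφ : ι → ℝ} {Gp : κp → ι → ℝ} {Gn : κn → ι → ℝ}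
    {cp : κp → ℝ} {cn : κn → ℝ} {uL uU u : ι → ℝ} (εp δp : κp → ℝ) (εn δn : κn → ℝ) (δφ : ℝ)
    (hcp : ∀ j, cp j ≤ 0) (hcn : ∀ j, cn j ≤ 0)
    (h : ¬∃ d : ι → ℝ,
      (∀ j, cp j ≥ -εp j → Gp j ⬝ᵥ d ≤ -δp j) ∧ (∀ j, cn j ≥ -εn j → Gn j ⬝ᵥ d ≤ -δn j) ∧
      Gφ ⬝ᵥ d ≤ -δφ ∧ (∀ i, u i = uL i → 0 ≤ d i) ∧ (∀ i, u i = uU i → d i ≤ 0)) :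
    fritzJohnError Gφ Gp Gn cp cn uL uU u ≤ max (⨆ j, εp j ^ 2) (⨆ j, εn j ^ 2) := by
  classical
  set M := max (⨆ j, εp j ^ 2) (⨆ j, εn j ^ 2)
  have hM : 0 ≤ M := le_max_of_le_left (Real.iSup_nonneg fun j => sq_nonneg _)
  have hεp : ∀ j, εp j ^ 2 ≤ M := fun j =>
    (le_ciSup (Finite.bddAbove_range fun j => εp j ^ 2) j).trans (le_max_left _ _)
  have hεn : ∀ j, εn j ^ 2 ≤ M := fun j =>
    (le_ciSup (Finite.bddAbove_range fun j => εn j ^ 2) j).trans (le_max_right _ _)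
  obtain ⟨w, hw0, hwP, hw1, hwN⟩ := exists_fritzJohn_weights_of_infeasible
    (fun k : Option (κp ⊕ κn) => k.elim Gφ (Sum.elim Gp Gn)) (fun k => k.elim δφ (Sum.elim δp δn))
    (fun k => k.elim True (Sum.elim (fun j => cp j ≥ -εp j) (fun j => cn j ≥ -εn j)))
    uL uU u (by
      rintro ⟨d, hd, hdL, hdU⟩
      exact h ⟨d, fun j => hd (some (Sum.inl j)), fun j => hd (some (Sum.inr j)),
        hd none trivial, hdL, hdU⟩)
  obtain ⟨ζL, ζU, hζL, hζU, hv, hL, hU⟩ := exists_bound_multipliers_of_mem_boxNormalCone hwN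
  refine fritzJohnError_le_of_residual_le (μφ := w none) (μp := fun j => w (some (Sum.inl j)))
    (μn := fun j => w (some (Sum.inr j))) (hw0 _) (fun j => hw0 _) (fun j => hw0 _) hζL hζU ?_
    (fritzJohnResidual_le_mul_multiplierNormSq hM ?_ hL hU
      (fun j => sq_mul_le_of_neg_le_or_eq_zero (hcp j) (hεp j)
        (or_iff_not_imp_left.2 (hwP (some (Sum.inl j)))))
      (fun j => sq_mul_le_of_neg_le_or_eq_zero (hcn j) (hεn j)
        (or_iff_not_imp_left.2 (hwP (some (Sum.inr j))))))
  · obtain ⟨k, -, hk⟩ := exists_ne_zero_of_sum_ne_zero (hw1 ▸ one_ne_zero)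
    have hw2 : 0 < ∑ k, w k ^ 2 :=
      sum_pos' (fun k _ => sq_nonneg _) ⟨k, mem_univ k, by positivity⟩
    rw [Fintype.sum_option, Fintype.sum_sum_type] at hw2
    have := sum_nonneg fun i (_ : i ∈ univ) => sq_nonneg (ζL i)
    have := sum_nonneg fun i (_ : i ∈ univ) => sq_nonneg (ζU i)
    unfold multiplierNormSq
    linarith
  · rw [← neg_sub, ← hv, neg_neg, Fintype.sum_option, Fintype.sum_sum_type, add_assoc]
    rfl

theorem fritz_john_error_small_at_infeasible_projection_general
    {n mp mg : ℕ} (uL uU : Fin n → ℝ)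
    (φ : (Fin n → ℝ) → ℝ)
    (gp : Fin mp → (Fin n → ℝ) → ℝ) (gn : Fin mg → (Fin n → ℝ) → ℝ)
    (u : Fin n → ℝ)
    (hfeasp : ∀ j, gp j u ≤ 0) (hfeasn : ∀ j, gn j u ≤ 0)
    (εp δp : Fin mp → ℝ) (εn δn : Fin mg → ℝ) (δφ : ℝ)
    (hinfeas : ¬ ∃ d : Fin n → ℝ,
      (∀ j, gp j u ≥ -εp j → fderiv ℝ (gp j) u d ≤ -δp j) ∧
      (∀ j, gn j u ≥ -εn j → fderiv ℝ (gn j) u d ≤ -δn j) ∧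
      fderiv ℝ φ u d ≤ -δφ ∧
      (∀ i, u i = uL i → 0 ≤ d i) ∧
      (∀ i, u i = uU i → d i ≤ 0)) :
    sInf {E : ℝ |
        ∃ (μφ : ℝ) (μp : Fin mp → ℝ) (μn : Fin mg → ℝ) (ζL ζU : Fin n → ℝ),
          0 ≤ μφ ∧ (∀ j, 0 ≤ μp j) ∧ (∀ j, 0 ≤ μn j) ∧
          (∀ i, 0 ≤ ζL i) ∧ (∀ i, 0 ≤ ζU i) ∧
          μφ ^ 2 + ∑ j, μp j ^ 2 + ∑ j, μn j ^ 2 +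
            ∑ i, ζL i ^ 2 + ∑ i, ζU i ^ 2 = 1 ∧
          E = (∑ i, (μφ * fderiv ℝ φ u (Pi.single i 1) +
                (∑ j, μp j * fderiv ℝ (gp j) u (Pi.single i 1)) +
                (∑ j, μn j * fderiv ℝ (gn j) u (Pi.single i 1)) -
                ζL i + ζU i) ^ 2) +
            (∑ j, (μp j * gp j u) ^ 2) + (∑ j, (μn j * gn j u) ^ 2) +
            ∑ i, ((ζL i * (uL i - u i)) ^ 2 + (ζU i * (u i - uU i)) ^ 2)}
      ≤ max (⨆ j, (εp j) ^ 2) (⨆ j, (εn j) ^ 2) := by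
  have hgrad : ∀ (f : (Fin n → ℝ) → ℝ) (d : Fin n → ℝ),
      (fun i => fderiv ℝ f u (Pi.single i 1)) ⬝ᵥ d = fderiv ℝ f u d := fun f d => by
    rw [dotProduct_comm]
    exact ((fderiv ℝ f u : (Fin n → ℝ) →ₗ[ℝ] ℝ).apply_eq_dotProduct d).symm
  refine fritzJohnError_le_of_infeasible εp δp εn δn δφ hfeasp hfeasn ?_
  simpa only [hgrad] using hinfeas

/-- Quantitative static form of Theorem 5: if at a feasible point `u`
the projection system — requiring `∇gp_j(u)ᵀd ≤ -δp j` for the `ε`-active experimental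
constraints, `∇gn_j(u)ᵀd ≤ -δn j` for the `ε`-active numerical constraints,
`∇φ(u)ᵀd ≤ -δφ`, `d i ≥ 0` at active lower bounds and `d i ≤ 0` at active upper
bounds — is infeasible, then the Fritz John error (with Euclidean normalization of
the multipliers) satisfies `ℰ(u) ≤ max (max_j εp j ²) (max_j εn j ²)`. -/
theorem fritz_john_error_small_at_infeasible_projection
    {n mp mg : ℕ} (uL uU : Fin n → ℝ)
    (φ : (Fin n → ℝ) → ℝ)
    (gp : Fin mp → (Fin n → ℝ) → ℝ) (gn : Fin mg → (Fin n → ℝ) → ℝ)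
    (U : Set (Fin n → ℝ)) (hUopen : IsOpen U) (hIU : Set.Icc uL uU ⊆ U)
    (hφ : ContDiffOn ℝ 1 φ U)
    (hgp : ∀ j, ContDiffOn ℝ 1 (gp j) U)
    (hgn : ∀ j, ContDiffOn ℝ 1 (gn j) U)
    (u : Fin n → ℝ) (huI : u ∈ Set.Icc uL uU)
    (hfeasp : ∀ j, gp j u ≤ 0) (hfeasn : ∀ j, gn j u ≤ 0)
    (εp δp : Fin mp → ℝ) (εn δn : Fin mg → ℝ) (δφ : ℝ)
    (hεp : ∀ j, 0 < εp j) (hδp : ∀ j, 0 < δp j)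
    (hεn : ∀ j, 0 < εn j) (hδn : ∀ j, 0 < δn j) (hδφ : 0 < δφ)
    (hinfeas : ¬ ∃ d : Fin n → ℝ,
      (∀ j, gp j u ≥ -εp j → fderiv ℝ (gp j) u d ≤ -δp j) ∧
      (∀ j, gn j u ≥ -εn j → fderiv ℝ (gn j) u d ≤ -δn j) ∧
      fderiv ℝ φ u d ≤ -δφ ∧
      (∀ i, u i = uL i → 0 ≤ d i) ∧
      (∀ i, u i = uU i → d i ≤ 0)) :
    sInf {E : ℝ |
        ∃ (μφ : ℝ) (μp : Fin mp → ℝ) (μn : Fin mg → ℝ) (ζL ζU : Fin n → ℝ),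
          0 ≤ μφ ∧ (∀ j, 0 ≤ μp j) ∧ (∀ j, 0 ≤ μn j) ∧
          (∀ i, 0 ≤ ζL i) ∧ (∀ i, 0 ≤ ζU i) ∧
          μφ ^ 2 + ∑ j, μp j ^ 2 + ∑ j, μn j ^ 2 +
            ∑ i, ζL i ^ 2 + ∑ i, ζU i ^ 2 = 1 ∧
          E = (∑ i, (μφ * fderiv ℝ φ u (Pi.single i 1) +
                (∑ j, μp j * fderiv ℝ (gp j) u (Pi.single i 1)) +
                (∑ j, μn j * fderiv ℝ (gn j) u (Pi.single i 1)) -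
                ζL i + ζU i) ^ 2) +
            (∑ j, (μp j * gp j u) ^ 2) + (∑ j, (μn j * gn j u) ^ 2) +
            ∑ i, ((ζL i * (uL i - u i)) ^ 2 + (ζU i * (u i - uU i)) ^ 2)}
      ≤ max (⨆ j, (εp j) ^ 2) (⨆ j, (εn j) ^ 2) :=
  fritz_john_error_small_at_infeasible_projection_general uL uU φ gp gn u hfeasp hfeasn εp δp εn δn
    δφ hinfeas
end
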